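/- arXiv:2502.01497 — 9 statements merged into one kernel-verified Lean document; each statement's English description precedes it below -/
import Mathlib

section
/- Let X be a set, U a symmetric subset of X × X containing the diagonal, and (W_i)_{i∈I} a family of subsets of X whose union is X. Suppose the composition U∘U is a Lebesgue entourage of (W_i), i.e. every subset B of X with B × B ⊆ U∘U is contained in some W_i. Then the U-thinnings U(W_i) := {x ∈ X | U[x] ⊆ W_i} still cover X; moreover there exists a partition (Ŵ_i)_{i∈I} of X (allowing empty members) with Ŵ_i ⊆ U(W_i) for every i, and consequently U[Ŵ_i] ⊆ W_i for every i. -/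
/-! The ball `U[x]` is `U ∘ U`-bounded, since by symmetry any two of its points are joined
through `x`; so the Lebesgue property puts it inside some `W i`, i.e. the thinnings cover.
Choosing such an index `f x` for every `x`, the fibres of `f` form the required partition. -/

lemma exists_mid_of_mem_ball_of_symm {X : Type*} {U : Set (X × X)}
    (hsym : ∀ a b : X, (a, b) ∈ U → (b, a) ∈ U) (x : X) :
    ∀ a ∈ {x' : X | (x', x) ∈ U}, ∀ b ∈ {x' : X | (x', x) ∈ U},
      ∃ y : X, (a, y) ∈ U ∧ (y, b) ∈ U :=
  fun _ ha b hb => ⟨x, ha, hsym b x hb⟩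

lemma exists_partition_subordinate {X I : Type*} {P : X → I → Prop} (h : ∀ x, ∃ i, P x i) :
    ∃ Wpart : I → Set X, (∀ x, ∃! i, x ∈ Wpart i) ∧ ∀ i, Wpart i ⊆ {x | P x i} := by
  choose f hf using h
  refine ⟨fun i => {x | f x = i}, fun x => ⟨f x, rfl, fun _ hi => hi.symm⟩, ?_⟩
  rintro i x rfl
  exact hf x

theorem stmt_0_general {X I : Type*} (U : Set (X × X))
    (hsym : ∀ a b : X, (a, b) ∈ U → (b, a) ∈ U)
    (W : I → Set X)
    (hleb : ∀ B : Set X, (∀ a ∈ B, ∀ b ∈ B, ∃ y : X, (a, y) ∈ U ∧ (y, b) ∈ U) →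
      ∃ i, B ⊆ W i) :
    (∀ x : X, ∃ i, {x' : X | (x', x) ∈ U} ⊆ W i) ∧
    ∃ Wpart : I → Set X,
      (∀ x : X, ∃! i, x ∈ Wpart i) ∧
      (∀ i, Wpart i ⊆ {x : X | {x' : X | (x', x) ∈ U} ⊆ W i}) ∧
      (∀ i, ∀ x ∈ Wpart i, ∀ x' : X, (x', x) ∈ U → x' ∈ W i) := by
  have thinnings_cover : ∀ x : X, ∃ i, {x' : X | (x', x) ∈ U} ⊆ W i :=
    fun x => hleb _ (exists_mid_of_mem_ball_of_symm hsym x)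
  obtain ⟨Wpart, hpart, hsub⟩ := exists_partition_subordinate thinnings_cover
  exact ⟨thinnings_cover, Wpart, hpart, hsub, fun i x hx _ hx' => hsub i hx hx'⟩

/-- For a symmetric entourage `U` containing the diagonal, if `U ∘ U` is a Lebesgue
entourage of a covering family `(W i)`, then the `U`-thinnings still cover, and there is a
partition refining the thinnings whose `U`-thickenings are contained in the `W i`. -/
theorem stmt_0 {X I : Type*} (U : Set (X × X))
    (hsym : ∀ a b : X, (a, b) ∈ U → (b, a) ∈ U)
    (hdiag : ∀ x : X, (x, x) ∈ U)
    (W : I → Set X)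
    (hcov : ∀ x : X, ∃ i, x ∈ W i)
    (hleb : ∀ B : Set X, (∀ a ∈ B, ∀ b ∈ B, ∃ y : X, (a, y) ∈ U ∧ (y, b) ∈ U) →
      ∃ i, B ⊆ W i) :
    (∀ x : X, ∃ i, {x' : X | (x', x) ∈ U} ⊆ W i) ∧
    ∃ Wpart : I → Set X,
      (∀ x : X, ∃! i, x ∈ Wpart i) ∧
      (∀ i, Wpart i ⊆ {x : X | {x' : X | (x', x) ∈ U} ⊆ W i}) ∧
      (∀ i, ∀ x ∈ Wpart i, ∀ x' : X, (x', x) ∈ U → x' ∈ W i) :=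
  stmt_0_general U hsym W hleb
end

section
/- Let (f : X → Y, 𝒵) be a branched coarse covering relative to a big family 𝒵 on Y. If P and P' are two coarse connections for f, then for every coarse entourage V of Y there exists a member Z of 𝒵 such that P ∩ f^{-1}(V_{Z^c}) = P' ∩ f^{-1}(V_{Z^c}), where V_{Z^c} := V ∩ (Y × (Y \ Z)) and f^{-1}(W) := (f × f)^{-1}(W). -/
/-- A coarse structure on a set `X`: a collection of entourages containing the diagonal,
closed under subsets, finite unions, inverses and compositions. -/
structure CoarseStructureOn (X : Type*) where
  ent : Set (Set (X × X))
  diag_mem : {p : X × X | p.1 = p.2} ∈ ent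
  subset_mem : ∀ ⦃V U : Set (X × X)⦄, U ∈ ent → V ⊆ U → V ∈ ent
  union_mem : ∀ ⦃U V : Set (X × X)⦄, U ∈ ent → V ∈ ent → U ∪ V ∈ ent
  inv_mem : ∀ ⦃U : Set (X × X)⦄, U ∈ ent → Prod.swap '' U ∈ ent
  comp_mem : ∀ ⦃U V : Set (X × X)⦄, U ∈ ent → V ∈ ent →
    {p : X × X | ∃ y, (p.1, y) ∈ U ∧ (y, p.2) ∈ V} ∈ ent

/-- A big family on `Y`: a nonempty filtered family of subsets such that every coarse
thickening of a member is contained in a member. -/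
structure IsBigFamily {Y : Type*} (C : CoarseStructureOn Y) (Z : Set (Set Y)) : Prop where
  nonempty : Z.Nonempty
  directed : ∀ A ∈ Z, ∀ B ∈ Z, ∃ D ∈ Z, A ⊆ D ∧ B ⊆ D
  big : ∀ V ∈ C.ent, ∀ A ∈ Z, ∃ B ∈ Z, {y : Y | ∃ a ∈ A, (y, a) ∈ V} ⊆ B

/-- `P` is a coarse connection for `f : X → Y` relative to the family `Z`:
unique `P`-lifts at every coarse scale of `Y` away from a suitable member, the
corresponding restriction of `P` is a coarse entourage of `X`, and every coarse
entourage of `X` is contained in `P` away from a suitable member. -/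
def IsConnection {X Y : Type*} (entX : Set (Set (X × X))) (entY : Set (Set (Y × Y)))
    (Z : Set (Set Y)) (f : X → Y) (P : Set (X × X)) : Prop :=
  (∀ V ∈ entY, ∃ A ∈ Z,
      (∀ y' y : Y, (y', y) ∈ V → y ∉ A → ∀ x : X, f x = y →
        ∃! x' : X, f x' = y' ∧ (x', x) ∈ P) ∧
      (P ∩ {p : X × X | (f p.1, f p.2) ∈ V ∧ f p.2 ∉ A}) ∈ entX) ∧
  (∀ U ∈ entX, ∃ A ∈ Z, U ∩ {p : X × X | f p.2 ∉ A} ⊆ P)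

/-!
The restriction of `P` to `V` away from a suitable member of `Z` is a coarse entourage
of `X`, so the connection `P'` contains it away from a (possibly larger) member of `Z`.
Exchanging the roles of `P` and `P'` and passing to a common upper bound in the directed
family `Z` gives the equality.
-/

namespace IsConnection

variable {X Y : Type*} {entX : Set (Set (X × X))} {entY : Set (Set (Y × Y))}
  {Z : Set (Set Y)} {f : X → Y} {P P' : Set (X × X)}

lemma exists_restrict_subset (hZ : DirectedOn (· ⊆ ·) Z)
    (hP : IsConnection entX entY Z f P) (hP' : IsConnection entX entY Z f P')
    {V : Set (Y × Y)} (hV : V ∈ entY) :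
    ∃ A ∈ Z, ∀ B, A ⊆ B →
      P ∩ {p : X × X | (f p.1, f p.2) ∈ V ∧ f p.2 ∉ B} ⊆ P' := by
  obtain ⟨A₁, hA₁, -, hU⟩ := hP.1 V hV
  obtain ⟨A₂, hA₂, hUP'⟩ := hP'.2 _ hU
  obtain ⟨A, hA, hA₁A, hA₂A⟩ := hZ A₁ hA₁ A₂ hA₂
  exact ⟨A, hA, fun B hAB p ⟨hp, hpV, hpB⟩ =>
    hUP' ⟨⟨hp, hpV, fun h => hpB (hAB (hA₁A h))⟩, fun h => hpB (hAB (hA₂A h))⟩⟩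

end IsConnection

theorem stmt_2_general {X Y : Type*} (CX : CoarseStructureOn X) (CY : CoarseStructureOn Y)
    (Z : Set (Set Y)) (hZ : IsBigFamily CY Z)
    (f : X → Y)
    (P P' : Set (X × X))
    (hP : IsConnection CX.ent CY.ent Z f P)
    (hP' : IsConnection CX.ent CY.ent Z f P') :
    ∀ V ∈ CY.ent, ∃ A ∈ Z,
      P ∩ {p : X × X | (f p.1, f p.2) ∈ V ∧ f p.2 ∉ A} =
      P' ∩ {p : X × X | (f p.1, f p.2) ∈ V ∧ f p.2 ∉ A} := by
  intro V hV
  obtain ⟨A, hA, hPP'⟩ := hP.exists_restrict_subset hZ.directed hP' hV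
  obtain ⟨A', hA', hP'P⟩ := hP'.exists_restrict_subset hZ.directed hP hV
  obtain ⟨D, hD, hAD, hA'D⟩ := hZ.directed A hA A' hA'
  refine ⟨D, hD, Set.Subset.antisymm ?_ ?_⟩
  · exact fun p hp => ⟨hPP' D hAD hp, hp.2⟩
  · exact fun p hp => ⟨hP'P D hA'D hp, hp.2⟩

/-- Essential uniqueness of the connection of a branched coarse covering: two connections
agree on the restriction of any coarse entourage of `Y` away from a suitable member of
the big family. -/
theorem stmt_2 {X Y : Type*} (CX : CoarseStructureOn X) (CY : CoarseStructureOn Y)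
    (BX : Set (Set X)) (BY : Set (Set Y))
    (Z : Set (Set Y)) (hZ : IsBigFamily CY Z)
    (f : X → Y)
    (hcontrolled : ∀ U ∈ CX.ent, (fun p : X × X => (f p.1, f p.2)) '' U ∈ CY.ent)
    (hbornological : ∀ B ∈ BX, f '' B ∈ BY)
    (hlocfin : ∀ y : Y, ∀ B ∈ BX, (f ⁻¹' {y} ∩ B).Finite)
    (P P' : Set (X × X))
    (hP : IsConnection CX.ent CY.ent Z f P)
    (hP' : IsConnection CX.ent CY.ent Z f P') :
    ∀ V ∈ CY.ent, ∃ A ∈ Z,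
      P ∩ {p : X × X | (f p.1, f p.2) ∈ V ∧ f p.2 ∉ A} =
      P' ∩ {p : X × X | (f p.1, f p.2) ∈ V ∧ f p.2 ∉ A} :=
  stmt_2_general CX CY Z hZ f P P' hP hP'
end

section
/- Let f : X → Y be a branched coarse covering relative to the trivial big family (∅) (consisting only of the empty set). Then for every coarse component X_i of X, the restriction f|_{X_i} : X_i → Y_{f(X_i)} is a bijection onto the coarse component of Y containing f(X_i), and this bijection is an isomorphism of coarse spaces (both it and its inverse are controlled). Moreover the coarse structure of X is generated by the entourages f^{-1}(V) ∩ P, where V ranges over the coarse entourages of Y and P is the connection. -/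
namespace CoarseStructureOn

variable {X : Type*} (C : CoarseStructureOn X)

theorem exists_mem_of_mem_of_mem {U W : Set (X × X)} (hU : U ∈ C.ent) (hW : W ∈ C.ent)
    {a b x₀ : X} (ha : (a, x₀) ∈ U) (hb : (b, x₀) ∈ W) : ∃ V ∈ C.ent, (a, b) ∈ V :=
  ⟨_, C.comp_mem hU (C.inv_mem hW), x₀, ha, (b, x₀), hb, rfl⟩

end CoarseStructureOn

section BranchedCoarseCovering

variable {X Y : Type*} {CX : CoarseStructureOn X} {CY : CoarseStructureOn Y} {f : X → Y}
  {P : Set (X × X)}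

theorem mem_connection_of_mem_of_mem (hsub : ∀ U ∈ CX.ent, U ⊆ P) {U W : Set (X × X)}
    (hU : U ∈ CX.ent) (hW : W ∈ CX.ent) {a b x₀ : X} (ha : (a, x₀) ∈ U) (hb : (b, x₀) ∈ W) :
    (a, b) ∈ P :=
  let ⟨_, hV, hab⟩ := CX.exists_mem_of_mem_of_mem hU hW ha hb
  hsub _ hV hab

theorem eq_of_mem_connection_of_map_eq
    (hlift : ∀ V ∈ CY.ent, ∀ y' y : Y, (y', y) ∈ V → ∀ x : X, f x = y →
      ∃! x' : X, f x' = y' ∧ (x', x) ∈ P)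
    (hsub : ∀ U ∈ CX.ent, U ⊆ P) {a b : X} (hab : (a, b) ∈ P) (hf : f a = f b) : a = b := by
  obtain ⟨_, -, huniq⟩ := hlift _ CY.diag_mem (f a) (f b) hf b rfl
  exact (huniq a ⟨rfl, hab⟩).trans (huniq b ⟨hf.symm, hsub _ CX.diag_mem rfl⟩).symm

theorem bijOn_coarseComponent
    (hcontrolled : ∀ U ∈ CX.ent, (fun p : X × X => (f p.1, f p.2)) '' U ∈ CY.ent)
    (hlift : ∀ V ∈ CY.ent, ∀ y' y : Y, (y', y) ∈ V → ∀ x : X, f x = y →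
      ∃! x' : X, f x' = y' ∧ (x', x) ∈ P)
    (hentP : ∀ V ∈ CY.ent, (P ∩ {p : X × X | (f p.1, f p.2) ∈ V}) ∈ CX.ent)
    (hsub : ∀ U ∈ CX.ent, U ⊆ P) (x₀ : X) :
    Set.BijOn f {x : X | ∃ U ∈ CX.ent, (x, x₀) ∈ U} {y : Y | ∃ V ∈ CY.ent, (y, f x₀) ∈ V} := by
  refine ⟨?mapsTo, ?injOn, ?surjOn⟩
  case mapsTo =>
    rintro x ⟨U, hU, hx⟩
    exact ⟨_, hcontrolled U hU, (x, x₀), hx, rfl⟩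
  case injOn =>
    rintro a ⟨U, hU, ha⟩ b ⟨W, hW, hb⟩ hf
    exact eq_of_mem_connection_of_map_eq hlift hsub
      (mem_connection_of_mem_of_mem hsub hU hW ha hb) hf
  case surjOn =>
    rintro y ⟨V, hV, hy⟩
    obtain ⟨x, ⟨hfx, hxP⟩, -⟩ := hlift V hV y (f x₀) hy x₀ rfl
    exact ⟨x, ⟨_, hentP V hV, hxP, show (f x, f x₀) ∈ V from hfx ▸ hy⟩, hfx⟩

theorem inverse_controlled_on_coarseComponent
    (hentP : ∀ V ∈ CY.ent, (P ∩ {p : X × X | (f p.1, f p.2) ∈ V}) ∈ CX.ent)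
    (hsub : ∀ U ∈ CX.ent, U ⊆ P) (x₀ : X) {V : Set (Y × Y)} (hV : V ∈ CY.ent) :
    {p : X × X | (∃ W ∈ CX.ent, (p.1, x₀) ∈ W) ∧ (∃ W ∈ CX.ent, (p.2, x₀) ∈ W) ∧
      (f p.1, f p.2) ∈ V} ∈ CX.ent := by
  refine CX.subset_mem (hentP V hV) ?_
  rintro ⟨a, b⟩ ⟨⟨U, hU, ha⟩, ⟨W, hW, hb⟩, hf⟩
  exact ⟨mem_connection_of_mem_of_mem hsub hU hW ha hb, hf⟩

end BranchedCoarseCovering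

theorem stmt_3_general {X Y : Type*} (CX : CoarseStructureOn X) (CY : CoarseStructureOn Y)
    (f : X → Y) (P : Set (X × X))
    (hcontrolled : ∀ U ∈ CX.ent, (fun p : X × X => (f p.1, f p.2)) '' U ∈ CY.ent)
    (hlift : ∀ V ∈ CY.ent, ∀ y' y : Y, (y', y) ∈ V → ∀ x : X, f x = y →
      ∃! x' : X, f x' = y' ∧ (x', x) ∈ P)
    (hentP : ∀ V ∈ CY.ent, (P ∩ {p : X × X | (f p.1, f p.2) ∈ V}) ∈ CX.ent)
    (hsub : ∀ U ∈ CX.ent, U ⊆ P) :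
    -- `f` restricts to a bijection from each coarse component onto the coarse component
    -- of the image
    (∀ x₀ : X, Set.BijOn f {x : X | ∃ U ∈ CX.ent, (x, x₀) ∈ U}
        {y : Y | ∃ V ∈ CY.ent, (y, f x₀) ∈ V}) ∧
    -- the restricted bijection is controlled
    (∀ x₀ : X, ∀ U ∈ CX.ent,
      (fun p : X × X => (f p.1, f p.2)) ''
        (U ∩ {p : X × X | (∃ W ∈ CX.ent, (p.1, x₀) ∈ W) ∧ ∃ W ∈ CX.ent, (p.2, x₀) ∈ W})
        ∈ CY.ent) ∧
    -- its inverse is controlled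
    (∀ x₀ : X, ∀ V ∈ CY.ent,
      {p : X × X | (∃ W ∈ CX.ent, (p.1, x₀) ∈ W) ∧ (∃ W ∈ CX.ent, (p.2, x₀) ∈ W) ∧
        (f p.1, f p.2) ∈ V} ∈ CX.ent) ∧
    -- the coarse structure of `X` is generated by the entourages `f⁻¹(V) ∩ P`
    (∀ U ∈ CX.ent, ∃ V ∈ CY.ent, U ⊆ {p : X × X | (f p.1, f p.2) ∈ V} ∩ P) ∧
    (∀ V ∈ CY.ent, {p : X × X | (f p.1, f p.2) ∈ V} ∩ P ∈ CX.ent) :=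
  ⟨bijOn_coarseComponent hcontrolled hlift hentP hsub,
    fun _ U hU => CY.subset_mem (hcontrolled U hU) (Set.image_mono Set.inter_subset_left),
    fun x₀ _ hV => inverse_controlled_on_coarseComponent hentP hsub x₀ hV,
    fun U hU => ⟨_, hcontrolled U hU, fun p hp => ⟨⟨p, hp, rfl⟩, hsub U hU hp⟩⟩,
    fun V hV => CX.subset_mem (hentP V hV) fun _ hp => ⟨hp.2, hp.1⟩⟩

/-- A branched coarse covering relative to the trivial big family `(∅)` restricts to an
isomorphism of coarse spaces from each coarse component of `X` onto the corresponding
coarse component of `Y`, and the coarse structure of `X` is generated by the entourages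
`f⁻¹(V) ∩ P`. -/
theorem stmt_3 {X Y : Type*} (CX : CoarseStructureOn X) (CY : CoarseStructureOn Y)
    (BX : Set (Set X)) (BY : Set (Set Y))
    (f : X → Y) (P : Set (X × X))
    (hcontrolled : ∀ U ∈ CX.ent, (fun p : X × X => (f p.1, f p.2)) '' U ∈ CY.ent)
    (hbornological : ∀ B ∈ BX, f '' B ∈ BY)
    (hlocfin : ∀ y : Y, ∀ B ∈ BX, (f ⁻¹' {y} ∩ B).Finite)
    (hlift : ∀ V ∈ CY.ent, ∀ y' y : Y, (y', y) ∈ V → ∀ x : X, f x = y →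
      ∃! x' : X, f x' = y' ∧ (x', x) ∈ P)
    (hentP : ∀ V ∈ CY.ent, (P ∩ {p : X × X | (f p.1, f p.2) ∈ V}) ∈ CX.ent)
    (hsub : ∀ U ∈ CX.ent, U ⊆ P) :
    -- `f` restricts to a bijection from each coarse component onto the coarse component
    -- of the image
    (∀ x₀ : X, Set.BijOn f {x : X | ∃ U ∈ CX.ent, (x, x₀) ∈ U}
        {y : Y | ∃ V ∈ CY.ent, (y, f x₀) ∈ V}) ∧
    -- the restricted bijection is controlled
    (∀ x₀ : X, ∀ U ∈ CX.ent,
      (fun p : X × X => (f p.1, f p.2)) ''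
        (U ∩ {p : X × X | (∃ W ∈ CX.ent, (p.1, x₀) ∈ W) ∧ ∃ W ∈ CX.ent, (p.2, x₀) ∈ W})
        ∈ CY.ent) ∧
    -- its inverse is controlled
    (∀ x₀ : X, ∀ V ∈ CY.ent,
      {p : X × X | (∃ W ∈ CX.ent, (p.1, x₀) ∈ W) ∧ (∃ W ∈ CX.ent, (p.2, x₀) ∈ W) ∧
        (f p.1, f p.2) ∈ V} ∈ CX.ent) ∧
    -- the coarse structure of `X` is generated by the entourages `f⁻¹(V) ∩ P`
    (∀ U ∈ CX.ent, ∃ V ∈ CY.ent, U ⊆ {p : X × X | (f p.1, f p.2) ∈ V} ∩ P) ∧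
    (∀ V ∈ CY.ent, {p : X × X | (f p.1, f p.2) ∈ V} ∩ P ∈ CX.ent) :=
  stmt_3_general CX CY f P hcontrolled hlift hentP hsub
end

section
/- Let f : X → Y be a branched coarse covering relative to a big family 𝒵 on Y, and let h : Y' → Y be a morphism of bornological coarse spaces. Form the pullback X' := X ×_Y Y' in coarse spaces (underlying set the fibre product, coarse structure the pullback), and equip X' with the bornology generated by preimages under the projection g : X' → X of bounded sets of X. Then f' : X' → Y' is a branched coarse covering relative to the big family 𝒵' := h^{-1}(𝒵), with connection P' := (g × g)^{-1}(P) for a connection P of f. -/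
/-- A bornology, given as the ideal of bounded subsets. -/
structure IsBornology {X : Type*} (B : Set (Set X)) : Prop where
  subset_mem : ∀ ⦃s t : Set X⦄, t ∈ B → s ⊆ t → s ∈ B
  union_mem : ∀ ⦃s t : Set X⦄, s ∈ B → t ∈ B → s ∪ t ∈ B
  singleton_mem : ∀ x : X, {x} ∈ B

/- The pullback is built fibrewise: a point of `X ×_Y Y'` over `y'` is a point of `X` over
`h y'`, so the fibres of `f'` embed into those of `f` and a `P`-lift `x'` of `x` along
`(h y', h y)` gives the unique `P'`-lift `(x', y')` of `(x, y)`. Every coarse condition on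
`X'` is checked on its two projections, where it follows from the corresponding condition
for `f` and the controlledness of `h`. -/

open Function Function.Pullback Set

namespace CoarseStructureOn

variable {α β : Type*}

def comap (C : CoarseStructureOn β) (k : α → β) : CoarseStructureOn α where
  ent := {U | Prod.map k k '' U ∈ C.ent}
  diag_mem := C.subset_mem C.diag_mem <| by
    rintro _ ⟨p, hp, rfl⟩
    exact congrArg k hp
  subset_mem _ _ hU hVU := C.subset_mem hU (image_mono hVU)
  union_mem U V hU hV := by
    simpa only [mem_ofPred_eq, image_union] using C.union_mem hU hV
  inv_mem U hU := by
    have : Prod.map k k '' (Prod.swap '' U) = Prod.swap '' (Prod.map k k '' U) := by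
      simp only [image_image]
      rfl
    simpa only [mem_ofPred_eq, this] using C.inv_mem hU
  comp_mem U V hU hV := C.subset_mem (C.comp_mem hU hV) <| by
    rintro _ ⟨p, ⟨y, hy₁, hy₂⟩, rfl⟩
    exact ⟨k y, ⟨(p.1, y), hy₁, rfl⟩, ⟨(y, p.2), hy₂, rfl⟩⟩

def inf (C D : CoarseStructureOn α) : CoarseStructureOn α where
  ent := C.ent ∩ D.ent
  diag_mem := ⟨C.diag_mem, D.diag_mem⟩
  subset_mem _ _ hU hVU := ⟨C.subset_mem hU.1 hVU, D.subset_mem hU.2 hVU⟩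
  union_mem _ _ hU hV := ⟨C.union_mem hU.1 hV.1, D.union_mem hU.2 hV.2⟩
  inv_mem _ hU := ⟨C.inv_mem hU.1, D.inv_mem hU.2⟩
  comp_mem _ _ hU hV := ⟨C.comp_mem hU.1 hV.1, D.comp_mem hU.2 hV.2⟩

end CoarseStructureOn

theorem IsBornology.comap {α β : Type*} {B : Set (Set β)} (hB : IsBornology B) (k : α → β) :
    IsBornology {s | ∃ t ∈ B, s ⊆ k ⁻¹' t} where
  subset_mem := by
    rintro s t ⟨u, hu, htu⟩ hst
    exact ⟨u, hu, hst.trans htu⟩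
  union_mem := by
    rintro s t ⟨u, hu, hsu⟩ ⟨v, hv, htv⟩
    exact ⟨u ∪ v, hB.union_mem hu hv, union_subset_union hsu htv⟩
  singleton_mem x := ⟨{k x}, hB.singleton_mem _, singleton_subset_iff.2 rfl⟩

theorem IsBigFamily.preimage {Y Y' : Type*} {C : CoarseStructureOn Y}
    {C' : CoarseStructureOn Y'} {Z : Set (Set Y)} (hZ : IsBigFamily C Z) {h : Y' → Y}
    (hh : ∀ U ∈ C'.ent, Prod.map h h '' U ∈ C.ent) :
    IsBigFamily C' {A' | ∃ A ∈ Z, A' = h ⁻¹' A} where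
  nonempty := by
    obtain ⟨A, hA⟩ := hZ.nonempty
    exact ⟨h ⁻¹' A, A, hA, rfl⟩
  directed := by
    rintro _ ⟨A, hA, rfl⟩ _ ⟨B, hB, rfl⟩
    obtain ⟨D, hD, hAD, hBD⟩ := hZ.directed A hA B hB
    exact ⟨h ⁻¹' D, ⟨D, hD, rfl⟩, preimage_mono hAD, preimage_mono hBD⟩
  big := by
    rintro V' hV' _ ⟨A, hA, rfl⟩
    obtain ⟨B, hB, hAB⟩ := hZ.big _ (hh V' hV') A hA
    refine ⟨h ⁻¹' B, ⟨B, hB, rfl⟩, ?_⟩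
    rintro y' ⟨a', ha', hy'a'⟩
    exact hAB ⟨h a', ha', (y', a'), hy'a', rfl⟩

namespace Function.Pullback

variable {X Y Y' : Type*} {f : X → Y} {h : Y' → Y}

theorem image_snd_subset {s : Set (f.Pullback h)} {t : Set X} (hs : s ⊆ fst ⁻¹' t) :
    snd '' s ⊆ h ⁻¹' (f '' t) := by
  rintro _ ⟨q, hq, rfl⟩
  exact ⟨q.fst, hs hq, q.2⟩

theorem mapsTo_fst_fiber_snd (y' : Y') :
    MapsTo fst (snd ⁻¹' {y'} : Set (f.Pullback h)) (f ⁻¹' {h y'}) := by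
  rintro q rfl
  exact q.2

theorem injOn_fst_fiber_snd (y' : Y') : InjOn fst (snd ⁻¹' {y'} : Set (f.Pullback h)) := by
  rintro q₁ rfl q₂ hq₂ hfst
  exact Subtype.ext (Prod.ext hfst hq₂.symm)

theorem finite_fiber_snd_inter {s : Set (f.Pullback h)} {t : Set X} (hs : s ⊆ fst ⁻¹' t)
    (y' : Y') (ht : (f ⁻¹' {h y'} ∩ t).Finite) : (snd ⁻¹' {y'} ∩ s).Finite :=
  have hmaps : MapsTo fst (snd ⁻¹' {y'} ∩ s) (f ⁻¹' {h y'} ∩ t) := fun _ hq =>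
    ⟨mapsTo_fst_fiber_snd y' hq.1, hs hq.2⟩
  ht.of_injOn hmaps ((injOn_fst_fiber_snd y').mono inter_subset_left)

theorem existsUnique_lift {P : Set (X × X)} (q : f.Pullback h) (y' : Y')
    (hlift : ∃! x : X, f x = h y' ∧ (x, q.fst) ∈ P) :
    ∃! q' : f.Pullback h, q'.snd = y' ∧ (q'.fst, q.fst) ∈ P := by
  obtain ⟨x, ⟨hx, hxP⟩, hx_unique⟩ := hlift
  refine ⟨⟨(x, y'), hx⟩, ⟨rfl, hxP⟩, ?_⟩
  rintro q' ⟨rfl, hq'P⟩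
  exact Subtype.ext (Prod.ext (hx_unique q'.fst ⟨q'.2, hq'P⟩) rfl)

end Function.Pullback

theorem IsConnection.pullback {X Y Y' : Type*} {CX : CoarseStructureOn X}
    {entY : Set (Set (Y × Y))} {CY' : CoarseStructureOn Y'} {Z : Set (Set Y)} {f : X → Y}
    {h : Y' → Y} {P : Set (X × X)} (hP : IsConnection CX.ent entY Z f P)
    (hh : ∀ U ∈ CY'.ent, Prod.map h h '' U ∈ entY) :
    IsConnection ((CX.comap fst).inf (CY'.comap snd)).ent CY'.ent
      {A' | ∃ A ∈ Z, A' = h ⁻¹' A} (snd : f.Pullback h → Y')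
      (Prod.map fst fst ⁻¹' P) := by
  refine ⟨fun V' hV' => ?_, fun U' hU' => ?_⟩
  · obtain ⟨A, hA, hlift, hPV⟩ := hP.1 _ (hh V' hV')
    refine ⟨h ⁻¹' A, ⟨A, hA, rfl⟩, ?_, CX.subset_mem hPV ?_, CY'.subset_mem hV' ?_⟩
    · rintro y₁ y₂ hy hy₂ q rfl
      exact existsUnique_lift q y₁ (hlift _ _ ⟨_, hy, rfl⟩ hy₂ q.fst q.2)
    · rintro _ ⟨p, ⟨hpP, hpV, hpA⟩, rfl⟩
      refine ⟨hpP, ⟨_, hpV, Prod.ext p.1.2.symm p.2.2.symm⟩, ?_⟩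
      exact p.2.2 ▸ hpA
    · rintro _ ⟨p, ⟨-, hpV, -⟩, rfl⟩
      exact hpV
  · obtain ⟨A, hA, hUP⟩ := hP.2 _ hU'.1
    refine ⟨h ⁻¹' A, ⟨A, hA, rfl⟩, ?_⟩
    rintro p ⟨hpU, hpA⟩
    exact hUP ⟨⟨p, hpU, rfl⟩, fun hA => hpA (show h p.2.snd ∈ A from p.2.2 ▸ hA)⟩

theorem stmt_4_general {X Y Y' : Type*}
    (CX : CoarseStructureOn X) (CY : CoarseStructureOn Y) (CY' : CoarseStructureOn Y')
    (BX : Set (Set X)) (BY : Set (Set Y)) (BY' : Set (Set Y'))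
    (hBX : IsBornology BX) (hBY' : IsBornology BY')
    (Z : Set (Set Y)) (hZ : IsBigFamily CY Z)
    (f : X → Y) (h : Y' → Y)
    -- `f` is a branched coarse covering relative to `Z` with connection `P`
    (hf_born : ∀ B ∈ BX, f '' B ∈ BY)
    (hf_locfin : ∀ y : Y, ∀ B ∈ BX, (f ⁻¹' {y} ∩ B).Finite)
    (P : Set (X × X)) (hP : IsConnection CX.ent CY.ent Z f P)
    -- `h` is a morphism of bornological coarse spaces (controlled and proper)
    (hh_controlled : ∀ U ∈ CY'.ent, (fun p : Y' × Y' => (h p.1, h p.2)) '' U ∈ CY.ent)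
    (hh_proper : ∀ B ∈ BY, h ⁻¹' B ∈ BY') :
    -- the pullback data
    ∀ g : {p : X × Y' // f p.1 = h p.2} → X, g = (fun q => q.1.1) →
    ∀ f' : {p : X × Y' // f p.1 = h p.2} → Y', f' = (fun q => q.1.2) →
    -- the pullback coarse structure: entourages are those whose images under both
    -- projections are entourages
    ∀ entX' : Set (Set ({p : X × Y' // f p.1 = h p.2} × {p : X × Y' // f p.1 = h p.2})),
      entX' = {U' | (fun p => (g p.1, g p.2)) '' U' ∈ CX.ent ∧
                    (fun p => (f' p.1, f' p.2)) '' U' ∈ CY'.ent} →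
    -- the bornology generated by `g`-preimages of bounded sets
    ∀ BX' : Set (Set {p : X × Y' // f p.1 = h p.2}),
      BX' = {B' | ∃ B ∈ BX, B' ⊆ g ⁻¹' B} →
    -- the pulled-back big family
    ∀ Z' : Set (Set Y'), Z' = {A' | ∃ A ∈ Z, A' = h ⁻¹' A} →
    -- conclusions: `f'` is a branched coarse covering relative to `Z'` with
    -- connection `(g × g)⁻¹ P`
    (∃ CX' : CoarseStructureOn {p : X × Y' // f p.1 = h p.2}, CX'.ent = entX') ∧
    IsBornology BX' ∧
    IsBigFamily CY' Z' ∧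
    (∀ U' ∈ entX', (fun p : _ × _ => (f' p.1, f' p.2)) '' U' ∈ CY'.ent) ∧
    (∀ B' ∈ BX', f' '' B' ∈ BY') ∧
    (∀ y' : Y', ∀ B' ∈ BX', (f' ⁻¹' {y'} ∩ B').Finite) ∧
    IsConnection entX' CY'.ent Z' f' {p | (g p.1, g p.2) ∈ P} := by
  intro g hg f' hf' entX' hent BX' hBX' Z' hZ'
  subst hg hf' hent hBX' hZ'
  exact ⟨⟨(CX.comap fst).inf (CY'.comap snd), rfl⟩, hBX.comap fst, hZ.preimage hh_controlled,
    fun U' hU' => hU'.2,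
    fun B' ⟨B, hB, hB'⟩ =>
      hBY'.subset_mem (hh_proper _ (hf_born B hB)) (image_snd_subset hB'),
    fun y' B' ⟨B, hB, hB'⟩ => finite_fiber_snd_inter hB' y' (hf_locfin (h y') B hB),
    hP.pullback hh_controlled⟩

/-- Base change of a branched coarse covering along a morphism `h : Y' → Y` of
bornological coarse spaces: the pullback `X' = X ×_Y Y'` (with the pullback coarse
structure and the bornology generated by `g`-preimages of bounded sets) is a branched
coarse covering over `Y'` relative to `h⁻¹(𝒵)`, with connection `(g × g)⁻¹(P)`. -/
theorem stmt_4 {X Y Y' : Type*}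
    (CX : CoarseStructureOn X) (CY : CoarseStructureOn Y) (CY' : CoarseStructureOn Y')
    (BX : Set (Set X)) (BY : Set (Set Y)) (BY' : Set (Set Y'))
    (hBX : IsBornology BX) (hBY : IsBornology BY) (hBY' : IsBornology BY')
    (Z : Set (Set Y)) (hZ : IsBigFamily CY Z)
    (f : X → Y) (h : Y' → Y)
    -- `f` is a branched coarse covering relative to `Z` with connection `P`
    (hf_controlled : ∀ U ∈ CX.ent, (fun p : X × X => (f p.1, f p.2)) '' U ∈ CY.ent)
    (hf_born : ∀ B ∈ BX, f '' B ∈ BY)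
    (hf_locfin : ∀ y : Y, ∀ B ∈ BX, (f ⁻¹' {y} ∩ B).Finite)
    (P : Set (X × X)) (hP : IsConnection CX.ent CY.ent Z f P)
    -- `h` is a morphism of bornological coarse spaces (controlled and proper)
    (hh_controlled : ∀ U ∈ CY'.ent, (fun p : Y' × Y' => (h p.1, h p.2)) '' U ∈ CY.ent)
    (hh_proper : ∀ B ∈ BY, h ⁻¹' B ∈ BY') :
    -- the pullback data
    ∀ g : {p : X × Y' // f p.1 = h p.2} → X, g = (fun q => q.1.1) →
    ∀ f' : {p : X × Y' // f p.1 = h p.2} → Y', f' = (fun q => q.1.2) →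
    -- the pullback coarse structure: entourages are those whose images under both
    -- projections are entourages
    ∀ entX' : Set (Set ({p : X × Y' // f p.1 = h p.2} × {p : X × Y' // f p.1 = h p.2})),
      entX' = {U' | (fun p => (g p.1, g p.2)) '' U' ∈ CX.ent ∧
                    (fun p => (f' p.1, f' p.2)) '' U' ∈ CY'.ent} →
    -- the bornology generated by `g`-preimages of bounded sets
    ∀ BX' : Set (Set {p : X × Y' // f p.1 = h p.2}),
      BX' = {B' | ∃ B ∈ BX, B' ⊆ g ⁻¹' B} →
    -- the pulled-back big family
    ∀ Z' : Set (Set Y'), Z' = {A' | ∃ A ∈ Z, A' = h ⁻¹' A} →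
    -- conclusions: `f'` is a branched coarse covering relative to `Z'` with
    -- connection `(g × g)⁻¹ P`
    (∃ CX' : CoarseStructureOn {p : X × Y' // f p.1 = h p.2}, CX'.ent = entX') ∧
    IsBornology BX' ∧
    IsBigFamily CY' Z' ∧
    (∀ U' ∈ entX', (fun p : _ × _ => (f' p.1, f' p.2)) '' U' ∈ CY'.ent) ∧
    (∀ B' ∈ BX', f' '' B' ∈ BY') ∧
    (∀ y' : Y', ∀ B' ∈ BX', (f' ⁻¹' {y'} ∩ B').Finite) ∧
    IsConnection entX' CY'.ent Z' f' {p | (g p.1, g p.2) ∈ P} :=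
  stmt_4_general CX CY CY' BX BY BY' hBX hBY' Z hZ f h hf_born hf_locfin P hP hh_controlled
    hh_proper
end

section
/- Let f : X → Y be a branched coarse covering relative to the big family 𝒵. If (Y, 𝒵) eventually has asymptotic dimension ≤ n, then (X, f^{-1}(𝒵)) eventually has asymptotic dimension ≤ n. More precisely: if for every coarse entourage V of Y there is a member Z of 𝒵 and a family 𝒲 of subsets covering Y \ Z with V a Lebesgue entourage of 𝒲, with bound bd(𝒲) := ∪_{W∈𝒲} W × W a coarse entourage of Y, and with multiplicity at most n+1, then for every coarse entourage U of X there is a member Z of 𝒵 and a family of subsets covering X \ f^{-1}(Z) with U a Lebesgue entourage, coarse bound, and multiplicity at most n+1. -/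
/-!
Fix a cover `𝒲` of `Y` witnessing dimension `≤ n` at scale `f(U)` outside a member `A` of the
big family. Since the connection `P` eventually contains every controlled set, after enlarging
`A` it contains the diagonal, the inverse and the square of the controlled set
`P ∩ f⁻¹(bd 𝒲)` away from `A`; hence `P` is an equivalence relation on each `f⁻¹(W \ A)`,
`W ∈ 𝒲`. Its classes, the sheets over the members of `𝒲`, form the required cover of `X`:
a `U`-bounded set lies over a member `W` and inside `P`, so in one sheet; a sheet is bounded by
`P ∩ f⁻¹(bd 𝒲)` composed with its inverse; and a point `x` lies in exactly one sheet over each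
`W ∋ f x`, so the multiplicity does not grow.
-/

open SetRel

section

variable {X Y : Type*}

def coverBound (𝒲 : Set (Set X)) : Set (X × X) := {p | ∃ W ∈ 𝒲, p.1 ∈ W ∧ p.2 ∈ W}

lemma prod_self_subset_coverBound {𝒲 : Set (Set X)} {W : Set X} (hW : W ∈ 𝒲) :
    W ×ˢ W ⊆ coverBound 𝒲 :=
  fun _ hp => ⟨W, hW, hp⟩

/-- `𝒲` witnesses dimension `≤ n` at scale `U` on the complement of `K`. -/
structure IsDimCoverOutside (C : CoarseStructureOn X) (n : ℕ) (U : Set (X × X)) (K : Set X)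
    (𝒲 : Set (Set X)) : Prop where
  covers : ∀ x, x ∉ K → ∃ W ∈ 𝒲, x ∈ W
  lebesgue : ∀ B : Set X, (∀ b ∈ B, b ∉ K) → (∀ b ∈ B, ∀ b' ∈ B, (b, b') ∈ U) →
    ∃ W ∈ 𝒲, B ⊆ W
  coverBound_mem : coverBound 𝒲 ∈ C.ent
  multiplicity : ∀ x, {W ∈ 𝒲 | x ∈ W}.Finite ∧ {W ∈ 𝒲 | x ∈ W}.ncard ≤ n + 1

lemma IsDimCoverOutside.mono {C : CoarseStructureOn X} {n : ℕ} {U : Set (X × X)}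
    {K K' : Set X} {𝒲 : Set (Set X)} (h : IsDimCoverOutside C n U K 𝒲) (hK : K ⊆ K') :
    IsDimCoverOutside C n U K' 𝒲 where
  covers x hx := h.covers x (fun hxK => hx (hK hxK))
  lebesgue B hB := h.lebesgue B (fun b hb hbK => hB b hb (hK hbK))
  coverBound_mem := h.coverBound_mem
  multiplicity := h.multiplicity

namespace CoarseStructureOn

variable (C : CoarseStructureOn X) {U V : SetRel X X}

lemma id_mem : SetRel.id ∈ C.ent := C.diag_mem

lemma relInv_mem (hU : U ∈ C.ent) : U.inv ∈ C.ent := by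
  simpa only [SetRel.inv, ← Set.image_swap_eq_preimage_swap] using C.inv_mem hU

lemma relComp_mem (hU : U ∈ C.ent) (hV : V ∈ C.ent) : U ○ V ∈ C.ent := C.comp_mem hU hV

end CoarseStructureOn

lemma IsBigFamily.exists_superset₃ {C : CoarseStructureOn Y} {Z : Set (Set Y)}
    (hZ : IsBigFamily C Z) {A₁ A₂ A₃ : Set Y} (h₁ : A₁ ∈ Z) (h₂ : A₂ ∈ Z) (h₃ : A₃ ∈ Z) :
    ∃ A ∈ Z, A₁ ⊆ A ∧ A₂ ⊆ A ∧ A₃ ⊆ A := by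
  obtain ⟨B, hB, h₁B, h₂B⟩ := hZ.directed A₁ h₁ A₂ h₂
  obtain ⟨A, hA, hBA, h₃A⟩ := hZ.directed B hB A₃ h₃
  exact ⟨A, hA, h₁B.trans hBA, h₂B.trans hBA, h₃A⟩

structure IsEquivOn (P : Set (X × X)) (S : Set X) : Prop where
  refl : ∀ a ∈ S, (a, a) ∈ P
  symm : ∀ a ∈ S, ∀ b ∈ S, (a, b) ∈ P → (b, a) ∈ P
  trans : ∀ a ∈ S, ∀ b ∈ S, ∀ c ∈ S, (a, b) ∈ P → (b, c) ∈ P → (a, c) ∈ P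

namespace BranchedCovering

variable (f : X → Y) (P : Set (X × X))

/-- The entourage `P ∩ f⁻¹(V_{Aᶜ})` of the connection condition. -/
def restrictOver (V : Set (Y × Y)) (A : Set Y) : SetRel X X :=
  P ∩ {p | (f p.1, f p.2) ∈ V ∧ f p.2 ∉ A}

def sheet (A W : Set Y) (x₀ : X) : Set X := {x | f x ∈ W \ A ∧ (x, x₀) ∈ P}

/-- `∅` is added so that the empty set lies in a member even when there are no sheets. -/
def sheets (A : Set Y) (𝒲 : Set (Set Y)) : Set (Set X) :=
  insert ∅ {S | ∃ W ∈ 𝒲, ∃ x₀, f x₀ ∈ W \ A ∧ sheet f P A W x₀ = S}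

variable {f P}

lemma restrictOver_anti {V : Set (Y × Y)} {A A' : Set Y} (hA : A ⊆ A') :
    restrictOver f P V A' ⊆ restrictOver f P V A :=
  fun _ ⟨hp, hV, hA'⟩ => ⟨hp, hV, fun h => hA' (hA h)⟩

theorem isEquivOn_preimage_diff {V : Set (Y × Y)} {A₀ A W : Set Y} (hA : A₀ ⊆ A)
    (hP : (SetRel.id ∪ (restrictOver f P V A₀ ○ restrictOver f P V A₀) ∪
      (restrictOver f P V A₀).inv) ∩ {p | f p.2 ∉ A} ⊆ P)
    (hW : W ×ˢ W ⊆ V) : IsEquivOn P (f ⁻¹' (W \ A)) := by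
  have restrict {a b} (ha : a ∈ f ⁻¹' (W \ A)) (hb : b ∈ f ⁻¹' (W \ A)) (hab : (a, b) ∈ P) :
      (a, b) ∈ restrictOver f P V A₀ :=
    ⟨hab, hW ⟨ha.1, hb.1⟩, fun h => hb.2 (hA h)⟩
  refine ⟨fun a ha => hP ⟨Or.inl (Or.inl rfl), ha.2⟩, fun a ha b hb hab => ?_,
    fun a ha b hb c hc hab hbc => ?_⟩
  · exact hP ⟨Or.inr (restrict ha hb hab), ha.2⟩
  · exact hP ⟨Or.inl (Or.inr ⟨b, restrict ha hb hab, restrict hb hc hbc⟩), hc.2⟩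

variable {A : Set Y} {𝒲 : Set (Set Y)}

lemma coverBound_sheets_subset :
    coverBound (sheets f P A 𝒲) ⊆
      restrictOver f P (coverBound 𝒲) A ○ (restrictOver f P (coverBound 𝒲) A).inv := by
  rintro ⟨x, x'⟩ ⟨S, rfl | ⟨W, hW, x₀, hx₀, rfl⟩, hx, hx'⟩
  · exact absurd hx (Set.notMem_empty x)
  · exact ⟨x₀, ⟨hx.2, ⟨W, hW, hx.1.1, hx₀.1⟩, hx₀.2⟩, ⟨hx'.2, ⟨W, hW, hx'.1.1, hx₀.1⟩, hx₀.2⟩⟩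

lemma exists_mem_sheets_superset {V : Set (Y × Y)} {U : Set (X × X)}
    (hleb : ∀ B : Set Y, (∀ b ∈ B, b ∉ A) → (∀ b ∈ B, ∀ b' ∈ B, (b, b') ∈ V) →
      ∃ W ∈ 𝒲, B ⊆ W)
    (hUV : ∀ p ∈ U, (f p.1, f p.2) ∈ V) (hU : U ∩ {p | f p.2 ∉ A} ⊆ P)
    {B : Set X} (hBA : ∀ b ∈ B, f b ∉ A) (hBU : ∀ b ∈ B, ∀ b' ∈ B, (b, b') ∈ U) :
    ∃ S ∈ sheets f P A 𝒲, B ⊆ S := by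
  rcases B.eq_empty_or_nonempty with rfl | ⟨b₀, hb₀⟩
  · exact ⟨∅, Set.mem_insert _ _, subset_rfl⟩
  obtain ⟨W, hW, hBW⟩ := hleb (f '' B) (Set.forall_mem_image.2 hBA)
    (Set.forall_mem_image.2 fun b hb =>
      Set.forall_mem_image.2 fun b' hb' => hUV _ (hBU b hb b' hb'))
  have hb₀W : f b₀ ∈ W \ A := ⟨hBW ⟨b₀, hb₀, rfl⟩, hBA b₀ hb₀⟩
  refine ⟨sheet f P A W b₀, Set.mem_insert_of_mem _ ⟨W, hW, b₀, hb₀W, rfl⟩, fun b hb => ?_⟩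
  exact ⟨⟨hBW ⟨b, hb, rfl⟩, hBA b hb⟩, hU ⟨hBU b hb b₀ hb₀, hBA b₀ hb₀⟩⟩

section Sheets

variable (hP : ∀ W ∈ 𝒲, IsEquivOn P (f ⁻¹' (W \ A)))
include hP

lemma mem_sheet_self {W : Set Y} (hW : W ∈ 𝒲) {x : X} (hx : f x ∈ W \ A) :
    x ∈ sheet f P A W x :=
  ⟨hx, (hP W hW).refl x hx⟩

lemma sheet_eq_of_mem {W : Set Y} (hW : W ∈ 𝒲) {x₀ x : X} (hx₀ : f x₀ ∈ W \ A)
    (hx : x ∈ sheet f P A W x₀) : sheet f P A W x₀ = sheet f P A W x := by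
  have hx₀x := (hP W hW).symm x hx.1 x₀ hx₀ hx.2
  ext y
  exact ⟨fun ⟨hy, hyx₀⟩ => ⟨hy, (hP W hW).trans y hy x₀ hx₀ x hx.1 hyx₀ hx₀x⟩,
    fun ⟨hy, hyx⟩ => ⟨hy, (hP W hW).trans y hy x hx.1 x₀ hx₀ hyx hx.2⟩⟩

lemma sheets_mem_subset_image (x : X) :
    {S ∈ sheets f P A 𝒲 | x ∈ S} ⊆ (sheet f P A · x) '' {W ∈ 𝒲 | f x ∈ W} := by
  rintro S ⟨rfl | ⟨W, hW, x₀, hx₀, rfl⟩, hxS⟩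
  · exact absurd hxS (Set.notMem_empty x)
  · exact ⟨W, ⟨hW, hxS.1.1⟩, (sheet_eq_of_mem hP hW hx₀ hxS).symm⟩

lemma sheets_multiplicity {n : ℕ}
    (hmul : ∀ y, {W ∈ 𝒲 | y ∈ W}.Finite ∧ {W ∈ 𝒲 | y ∈ W}.ncard ≤ n + 1) (x : X) :
    {S ∈ sheets f P A 𝒲 | x ∈ S}.Finite ∧ {S ∈ sheets f P A 𝒲 | x ∈ S}.ncard ≤ n + 1 := by
  obtain ⟨hfin, hcard⟩ := hmul (f x)
  have hsub := sheets_mem_subset_image hP x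
  exact ⟨(hfin.image _).subset hsub,
    (Set.ncard_le_ncard hsub (hfin.image _)).trans ((Set.ncard_image_le hfin).trans hcard)⟩

end Sheets

theorem isDimCoverOutside_sheets {CX : CoarseStructureOn X} {CY : CoarseStructureOn Y} {n : ℕ}
    {U : Set (X × X)} {V : Set (Y × Y)} (hY : IsDimCoverOutside CY n V A 𝒲)
    (hUV : ∀ p ∈ U, (f p.1, f p.2) ∈ V) (hP : ∀ W ∈ 𝒲, IsEquivOn P (f ⁻¹' (W \ A)))
    (hU : U ∩ {p | f p.2 ∉ A} ⊆ P) (hE : restrictOver f P (coverBound 𝒲) A ∈ CX.ent) :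
    IsDimCoverOutside CX n U (f ⁻¹' A) (sheets f P A 𝒲) where
  covers x hx := by
    obtain ⟨W, hW, hxW⟩ := hY.covers (f x) hx
    exact ⟨_, Set.mem_insert_of_mem _ ⟨W, hW, x, ⟨hxW, hx⟩, rfl⟩, mem_sheet_self hP hW ⟨hxW, hx⟩⟩
  lebesgue _ hBA hBU := exists_mem_sheets_superset hY.lebesgue hUV hU hBA hBU
  coverBound_mem :=
    CX.subset_mem (CX.relComp_mem hE (CX.relInv_mem hE)) coverBound_sheets_subset
  multiplicity := sheets_multiplicity hP hY.multiplicity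

end BranchedCovering

end

open BranchedCovering

theorem stmt_5_general {X Y : Type*} (CX : CoarseStructureOn X) (CY : CoarseStructureOn Y)
    (Z : Set (Set Y)) (hZ : IsBigFamily CY Z)
    (f : X → Y) (n : ℕ)
    (hcontrolled : ∀ U ∈ CX.ent, (fun p : X × X => (f p.1, f p.2)) '' U ∈ CY.ent)
    (P : Set (X × X)) (hP : IsConnection CX.ent CY.ent Z f P)
    -- `(Y, 𝒵)` eventually has asymptotic dimension `≤ n`
    (hdimY : ∀ V ∈ CY.ent, ∃ A ∈ Z, ∃ 𝒲 : Set (Set Y),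
      (∀ y : Y, y ∉ A → ∃ W ∈ 𝒲, y ∈ W) ∧
      (∀ B : Set Y, (∀ b ∈ B, b ∉ A) → (∀ b ∈ B, ∀ b' ∈ B, (b, b') ∈ V) →
        ∃ W ∈ 𝒲, B ⊆ W) ∧
      {p : Y × Y | ∃ W ∈ 𝒲, p.1 ∈ W ∧ p.2 ∈ W} ∈ CY.ent ∧
      (∀ y : Y, {W ∈ 𝒲 | y ∈ W}.Finite ∧ {W ∈ 𝒲 | y ∈ W}.ncard ≤ n + 1)) :
    -- `(X, f⁻¹(𝒵))` eventually has asymptotic dimension `≤ n`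
    ∀ U ∈ CX.ent, ∃ A ∈ Z, ∃ 𝒲 : Set (Set X),
      (∀ x : X, f x ∉ A → ∃ W ∈ 𝒲, x ∈ W) ∧
      (∀ B : Set X, (∀ b ∈ B, f b ∉ A) → (∀ b ∈ B, ∀ b' ∈ B, (b, b') ∈ U) →
        ∃ W ∈ 𝒲, B ⊆ W) ∧
      {p : X × X | ∃ W ∈ 𝒲, p.1 ∈ W ∧ p.2 ∈ W} ∈ CX.ent ∧
      (∀ x : X, {W ∈ 𝒲 | x ∈ W}.Finite ∧ {W ∈ 𝒲 | x ∈ W}.ncard ≤ n + 1) := by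
  intro U hU
  obtain ⟨AY, hAY, 𝒲, hcov, hleb, hbd, hmul⟩ := hdimY _ (hcontrolled U hU)
  have hY : IsDimCoverOutside CY n _ AY 𝒲 := ⟨hcov, hleb, hbd, hmul⟩
  obtain ⟨A₀, hA₀, -, hE₀⟩ := hP.1 _ hY.coverBound_mem
  set E := restrictOver f P (coverBound 𝒲) A₀
  obtain ⟨A₁, hA₁, hP₁⟩ := hP.2 (SetRel.id ∪ (E ○ E) ∪ E.inv ∪ U) <|
    CX.union_mem (CX.union_mem (CX.union_mem CX.id_mem (CX.relComp_mem hE₀ hE₀))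
      (CX.relInv_mem hE₀)) hU
  obtain ⟨A, hA, hAYA, hA₀A, hA₁A⟩ := hZ.exists_superset₃ hAY hA₀ hA₁
  have hP_of_subset : ∀ T ⊆ SetRel.id ∪ (E ○ E) ∪ E.inv ∪ U, T ∩ {p | f p.2 ∉ A} ⊆ P :=
    fun T hT p hp => hP₁ ⟨hT hp.1, fun h => hp.2 (hA₁A h)⟩
  have hX := isDimCoverOutside_sheets (hY.mono hAYA) (fun p hp => ⟨p, hp, rfl⟩)
    (fun W hW => isEquivOn_preimage_diff hA₀A (hP_of_subset _ Set.subset_union_left)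
      (prod_self_subset_coverBound hW))
    (hP_of_subset U Set.subset_union_right) (CX.subset_mem hE₀ (restrictOver_anti hA₀A))
  exact ⟨A, hA, _, hX.covers, hX.lebesgue, hX.coverBound_mem, hX.multiplicity⟩

/-- If the target of a branched coarse covering eventually has asymptotic dimension `≤ n`
relative to the big family, then so does the source relative to the preimage family. -/
theorem stmt_5 {X Y : Type*} (CX : CoarseStructureOn X) (CY : CoarseStructureOn Y)
    (BX : Set (Set X)) (BY : Set (Set Y))
    (Z : Set (Set Y)) (hZ : IsBigFamily CY Z)
    (f : X → Y) (n : ℕ)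
    (hcontrolled : ∀ U ∈ CX.ent, (fun p : X × X => (f p.1, f p.2)) '' U ∈ CY.ent)
    (hbornological : ∀ B ∈ BX, f '' B ∈ BY)
    (hlocfin : ∀ y : Y, ∀ B ∈ BX, (f ⁻¹' {y} ∩ B).Finite)
    (P : Set (X × X)) (hP : IsConnection CX.ent CY.ent Z f P)
    -- `(Y, 𝒵)` eventually has asymptotic dimension `≤ n`
    (hdimY : ∀ V ∈ CY.ent, ∃ A ∈ Z, ∃ 𝒲 : Set (Set Y),
      (∀ y : Y, y ∉ A → ∃ W ∈ 𝒲, y ∈ W) ∧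
      (∀ B : Set Y, (∀ b ∈ B, b ∉ A) → (∀ b ∈ B, ∀ b' ∈ B, (b, b') ∈ V) →
        ∃ W ∈ 𝒲, B ⊆ W) ∧
      {p : Y × Y | ∃ W ∈ 𝒲, p.1 ∈ W ∧ p.2 ∈ W} ∈ CY.ent ∧
      (∀ y : Y, {W ∈ 𝒲 | y ∈ W}.Finite ∧ {W ∈ 𝒲 | y ∈ W}.ncard ≤ n + 1)) :
    -- `(X, f⁻¹(𝒵))` eventually has asymptotic dimension `≤ n`
    ∀ U ∈ CX.ent, ∃ A ∈ Z, ∃ 𝒲 : Set (Set X),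
      (∀ x : X, f x ∉ A → ∃ W ∈ 𝒲, x ∈ W) ∧
      (∀ B : Set X, (∀ b ∈ B, f b ∉ A) → (∀ b ∈ B, ∀ b' ∈ B, (b, b') ∈ U) →
        ∃ W ∈ 𝒲, B ⊆ W) ∧
      {p : X × X | ∃ W ∈ 𝒲, p.1 ∈ W ∧ p.2 ∈ W} ∈ CX.ent ∧
      (∀ x : X, {W ∈ 𝒲 | x ∈ W}.Finite ∧ {W ∈ 𝒲 | x ∈ W}.ncard ≤ n + 1) :=
  stmt_5_general CX CY Z hZ f n hcontrolled P hP hdimY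
end

section
/- Let H and H' be Hilbert spaces, I an index set, n ∈ ℕ and C ≥ 0. Let (Q_i)_{i∈I} be pairwise orthogonal orthogonal-projections on H, and (P_i)_{i∈I} be orthogonal projections on H' such that for every finite subset F ⊆ I the operator norm of Σ_{i∈F} P_i is at most n. Let (B_i)_{i∈I} be bounded operators H → H' with B_i = P_i ∘ B_i ∘ Q_i and ‖B_i‖ ≤ C for all i. Then for every finite subset F ⊆ I one has ‖Σ_{i∈F} B_i‖ ≤ √n · C. -/
/-!
Pass to the adjoint. For `x : H'` the vectors `(B i)† x = Q i ((B i)† (P i x))` lie in the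
mutually orthogonal ranges of the `Q i`, so by Pythagoras
`‖(∑ B i)† x‖² = ∑ ‖(B i)† x‖² ≤ C² ∑ ‖P i x‖² = C² re ⟪x, (∑ P i) x⟫ ≤ C² ‖∑ P i‖ ‖x‖²`,
and `‖∑ B i‖ = ‖(∑ B i)†‖`.
-/

open scoped InnerProductSpace

section

open ContinuousLinearMap RCLike

variable {𝕜 E F ι : Type*} [RCLike 𝕜]
  [NormedAddCommGroup E] [InnerProductSpace 𝕜 E] [NormedAddCommGroup F] [InnerProductSpace 𝕜 F]

theorem norm_sum_sq_eq_sum_norm_sq_of_pairwise_inner_eq_zero {s : Finset ι} {v : ι → E}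
    (hv : (s : Set ι).Pairwise fun i j => ⟪v i, v j⟫_𝕜 = 0) :
    ‖∑ i ∈ s, v i‖ ^ 2 = ∑ i ∈ s, ‖v i‖ ^ 2 := by
  classical
  induction s using Finset.induction_on with
  | empty => simp
  | insert a s ha ih =>
    rw [Finset.coe_insert, Set.pairwise_insert] at hv
    have ha_orth : ⟪v a, ∑ j ∈ s, v j⟫_𝕜 = 0 := by
      rw [inner_sum]
      exact Finset.sum_eq_zero fun j hj => (hv.2 j hj (ne_of_mem_of_not_mem hj ha).symm).1
    rw [Finset.sum_insert ha, Finset.sum_insert ha, @norm_add_sq 𝕜, ha_orth, ih hv.1]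
    simp

section CompleteSpace

variable [CompleteSpace E] [CompleteSpace F]

theorem IsStarProjection.norm_apply_sq_eq_re_inner {p : F →L[𝕜] F} (hp : IsStarProjection p)
    (x : F) : ‖p x‖ ^ 2 = re ⟪x, p x⟫_𝕜 := by
  rw [@norm_sq_eq_re_inner 𝕜, ← adjoint_inner_right, hp.isSelfAdjoint.adjoint_eq,
    ← mul_apply_eq_comp, hp.isIdempotentElem.eq]

theorem sum_norm_apply_sq_le_norm_sum_mul {s : Finset ι} {P : ι → F →L[𝕜] F}
    (hP : ∀ i ∈ s, IsStarProjection (P i)) (x : F) :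
    ∑ i ∈ s, ‖P i x‖ ^ 2 ≤ ‖∑ i ∈ s, P i‖ * ‖x‖ ^ 2 :=
  calc ∑ i ∈ s, ‖P i x‖ ^ 2 = re ⟪x, (∑ i ∈ s, P i) x⟫_𝕜 := by
        rw [sum_apply, inner_sum, map_sum]
        exact Finset.sum_congr rfl fun i hi => (hP i hi).norm_apply_sq_eq_re_inner x
    _ ≤ ‖x‖ * ‖(∑ i ∈ s, P i) x‖ := (re_le_norm _).trans (norm_inner_le_norm _ _)
    _ ≤ ‖x‖ * (‖∑ i ∈ s, P i‖ * ‖x‖) := by gcongr; exact le_opNorm _ _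
    _ = ‖∑ i ∈ s, P i‖ * ‖x‖ ^ 2 := by ring

theorem inner_apply_apply_eq_zero_of_mul_eq_zero {Q R : E →L[𝕜] E} (hQ : IsSelfAdjoint Q)
    (hQR : Q * R = 0) (u w : E) : ⟪Q u, R w⟫_𝕜 = 0 := by
  rw [← hQ.adjoint_eq, adjoint_inner_left, ← mul_apply_eq_comp, hQR, zero_apply, inner_zero_right]

theorem adjoint_eq_comp_adjoint_comp {B : E →L[𝕜] F} {P : F →L[𝕜] F} {Q : E →L[𝕜] E}
    (hP : IsSelfAdjoint P) (hQ : IsSelfAdjoint Q) (hB : B = P ∘L B ∘L Q) :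
    adjoint B = Q ∘L adjoint B ∘L P := by
  conv_lhs => rw [hB]
  rw [adjoint_comp, adjoint_comp, hP.adjoint_eq, hQ.adjoint_eq, comp_assoc]

variable {s : Finset ι} {C : ℝ} {Q : ι → E →L[𝕜] E} {P : ι → F →L[𝕜] F} {B : ι → E →L[𝕜] F}

theorem norm_sum_adjoint_apply_sq_le (hQ : ∀ i ∈ s, IsSelfAdjoint (Q i))
    (hQQ : (s : Set ι).Pairwise fun i j => Q i * Q j = 0) (hP : ∀ i ∈ s, IsStarProjection (P i))
    (hB : ∀ i ∈ s, B i = P i ∘L B i ∘L Q i) (hBC : ∀ i ∈ s, ‖B i‖ ≤ C) (x : F) :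
    ‖∑ i ∈ s, adjoint (B i) x‖ ^ 2 ≤ C ^ 2 * (‖∑ i ∈ s, P i‖ * ‖x‖ ^ 2) := by
  have hBadj (i) (hi : i ∈ s) (y : F) : adjoint (B i) y = Q i (adjoint (B i) (P i y)) := by
    conv_lhs => rw [adjoint_eq_comp_adjoint_comp (hP i hi).isSelfAdjoint (hQ i hi) (hB i hi)]
    rfl
  have hBadj_P (i) (hi : i ∈ s) : adjoint (B i) (P i x) = adjoint (B i) x := by
    rw [hBadj i hi (P i x), hBadj i hi x, ← mul_apply_eq_comp (P i),
      (hP i hi).isIdempotentElem.eq]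
  have horth : (s : Set ι).Pairwise fun i j => ⟪adjoint (B i) x, adjoint (B j) x⟫_𝕜 = 0 :=
    fun i hi j hj hij => by
      dsimp only
      rw [hBadj i hi, hBadj j hj]
      exact inner_apply_apply_eq_zero_of_mul_eq_zero (hQ i hi) (hQQ hi hj hij) _ _
  have hle (i) (hi : i ∈ s) : ‖adjoint (B i) x‖ ^ 2 ≤ C ^ 2 * ‖P i x‖ ^ 2 := by
    rw [← mul_pow]
    gcongr
    calc ‖adjoint (B i) x‖ = ‖adjoint (B i) (P i x)‖ := by rw [← hBadj_P i hi]
      _ ≤ ‖adjoint (B i)‖ * ‖P i x‖ := le_opNorm _ _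
      _ ≤ C * ‖P i x‖ := by rw [adjoint.norm_map]; gcongr; exact hBC i hi
  calc ‖∑ i ∈ s, adjoint (B i) x‖ ^ 2 = ∑ i ∈ s, ‖adjoint (B i) x‖ ^ 2 :=
        norm_sum_sq_eq_sum_norm_sq_of_pairwise_inner_eq_zero horth
    _ ≤ ∑ i ∈ s, C ^ 2 * ‖P i x‖ ^ 2 := Finset.sum_le_sum hle
    _ ≤ C ^ 2 * (‖∑ i ∈ s, P i‖ * ‖x‖ ^ 2) := by
        rw [← Finset.mul_sum]; gcongr; exact sum_norm_apply_sq_le_norm_sum_mul hP x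

theorem norm_sum_le_sqrt_norm_sum_mul (hC : 0 ≤ C) (hQ : ∀ i ∈ s, IsSelfAdjoint (Q i))
    (hQQ : (s : Set ι).Pairwise fun i j => Q i * Q j = 0) (hP : ∀ i ∈ s, IsStarProjection (P i))
    (hB : ∀ i ∈ s, B i = P i ∘L B i ∘L Q i) (hBC : ∀ i ∈ s, ‖B i‖ ≤ C) :
    ‖∑ i ∈ s, B i‖ ≤ √‖∑ i ∈ s, P i‖ * C := by
  rw [← adjoint.norm_map]
  refine opNorm_le_bound _ (by positivity) fun x => ?_
  refine (pow_le_pow_iff_left₀ (norm_nonneg _) (by positivity) two_ne_zero).mp ?_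
  rw [map_sum, sum_apply, mul_pow, mul_pow, Real.sq_sqrt (norm_nonneg _)]
  linarith [norm_sum_adjoint_apply_sq_le hQ hQQ hP hB hBC x]

end CompleteSpace

end

theorem stmt_7_general {H H' : Type*}
    [NormedAddCommGroup H] [InnerProductSpace ℂ H] [CompleteSpace H]
    [NormedAddCommGroup H'] [InnerProductSpace ℂ H'] [CompleteSpace H']
    {I : Type*} (n : ℕ) (C : ℝ) (hC : 0 ≤ C)
    (Q : I → H →L[ℂ] H) (P : I → H' →L[ℂ] H')
    (hQsa : ∀ i, ContinuousLinearMap.adjoint (Q i) = Q i)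
    (hQorth : ∀ i j, i ≠ j → Q i ∘L Q j = 0)
    (hPproj : ∀ i, P i ∘L P i = P i)
    (hPsa : ∀ i, ContinuousLinearMap.adjoint (P i) = P i)
    (hPbound : ∀ F : Finset I, ‖∑ i ∈ F, P i‖ ≤ (n : ℝ))
    (B : I → H →L[ℂ] H')
    (hB : ∀ i, B i = P i ∘L B i ∘L Q i)
    (hBnorm : ∀ i, ‖B i‖ ≤ C) :
    ∀ F : Finset I, ‖∑ i ∈ F, B i‖ ≤ Real.sqrt n * C := by
  intro F
  calc ‖∑ i ∈ F, B i‖ ≤ √‖∑ i ∈ F, P i‖ * C :=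
        norm_sum_le_sqrt_norm_sum_mul hC (fun i _ => hQsa i) (fun i _ j _ => hQorth i j)
          (fun i _ => ⟨hPproj i, hPsa i⟩) (fun i _ => hB i) (fun i _ => hBnorm i)
    _ ≤ √n * C := by gcongr; exact hPbound F

/-- Norm estimate for sums of operators with pairwise orthogonal sources and targets of
bounded multiplicity: if the `Q i` are pairwise orthogonal projections, the finite sums of
the projections `P i` have norm at most `n`, and `B i = P i ∘ B i ∘ Q i` with
`‖B i‖ ≤ C`, then `‖∑_{i ∈ F} B i‖ ≤ √n · C`. -/
theorem stmt_7 {H H' : Type*}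
    [NormedAddCommGroup H] [InnerProductSpace ℂ H] [CompleteSpace H]
    [NormedAddCommGroup H'] [InnerProductSpace ℂ H'] [CompleteSpace H']
    {I : Type*} (n : ℕ) (C : ℝ) (hC : 0 ≤ C)
    (Q : I → H →L[ℂ] H) (P : I → H' →L[ℂ] H')
    (hQproj : ∀ i, Q i ∘L Q i = Q i)
    (hQsa : ∀ i, ContinuousLinearMap.adjoint (Q i) = Q i)
    (hQorth : ∀ i j, i ≠ j → Q i ∘L Q j = 0)
    (hPproj : ∀ i, P i ∘L P i = P i)
    (hPsa : ∀ i, ContinuousLinearMap.adjoint (P i) = P i)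
    (hPbound : ∀ F : Finset I, ‖∑ i ∈ F, P i‖ ≤ (n : ℝ))
    (B : I → H →L[ℂ] H')
    (hB : ∀ i, B i = P i ∘L B i ∘L Q i)
    (hBnorm : ∀ i, ‖B i‖ ≤ C) :
    ∀ F : Finset I, ‖∑ i ∈ F, B i‖ ≤ Real.sqrt n * C :=
  stmt_7_general n C hC Q P hQsa hQorth hPproj hPsa hPbound B hB hBnorm
end

section
/- Let H be a Hilbert space, (Q_i)_{i∈I} a family of pairwise orthogonal orthogonal-projections on H whose finite partial sums converge strongly to the identity, and (P_i)_{i∈I} orthogonal projections on H with ‖Σ_{i∈F} P_i‖ ≤ n for every finite F ⊆ I. Let A be a bounded operator on H with P_i A Q_i = A Q_i for every i (i.e. the range of A Q_i is contained in the range of P_i). Then ‖A‖ ≤ √n · sup_{i∈I} ‖A Q_i‖. -/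
/-!
For `v ∈ H` the vectors `xᵢ = A Qᵢ v` satisfy `Pᵢ xᵢ = xᵢ`, so for a finite `F` and
`y = ∑_{i∈F} xᵢ`, Cauchy–Schwarz gives
`‖y‖² = ∑ ⟪xᵢ, Pᵢ y⟫ ≤ (∑ ‖xᵢ‖²)^½ (∑ ‖Pᵢ y‖²)^½` with `∑ ‖Pᵢ y‖² = ⟪y, (∑ Pᵢ) y⟫ ≤ n ‖y‖²`.
Since `‖xᵢ‖ ≤ c ‖Qᵢ v‖` and the `Qᵢ` are orthogonal (`∑ ‖Qᵢ v‖² ≤ ‖v‖²`), this yields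
`‖y‖ ≤ √n c ‖v‖`, and `y → A v` as `F` grows.
-/

open Finset RCLike Filter Topology
open scoped InnerProductSpace

theorem IsStarProjection.sum_of_pairwise_mul_eq_zero {ι R : Type*} [NonUnitalSemiring R]
    [StarRing R] {p : ι → R} (hp : ∀ i, IsStarProjection (p i))
    (horth : Pairwise fun i j => p i * p j = 0) (s : Finset ι) :
    IsStarProjection (∑ i ∈ s, p i) := by
  classical
  induction s using Finset.induction_on with
  | empty => simp [IsStarProjection.zero]
  | insert a s has ih =>
    rw [sum_insert has]
    refine (hp a).add ih ?_
    rw [mul_sum]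
    exact sum_eq_zero fun i hi => horth (ne_of_mem_of_not_mem hi has).symm

section InnerProduct

variable {𝕜 E ι : Type*} [RCLike 𝕜] [NormedAddCommGroup E] [InnerProductSpace 𝕜 E]
  [CompleteSpace E]

theorem IsSelfAdjoint.inner_apply_left {T : E →L[𝕜] E} (hT : IsSelfAdjoint T) (x y : E) :
    ⟪T x, y⟫_𝕜 = ⟪x, T y⟫_𝕜 :=
  hT.isSymmetric x y

theorem IsStarProjection.re_inner_apply_eq_norm_sq {p : E →L[𝕜] E} (hp : IsStarProjection p)
    (x : E) : re ⟪x, p x⟫_𝕜 = ‖p x‖ ^ 2 := by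
  rw [← inner_self_eq_norm_sq (𝕜 := 𝕜), hp.isSelfAdjoint.inner_apply_left x (p x)]
  congr 2
  exact congr($(hp.isIdempotentElem.eq) x).symm

theorem sum_norm_sq_apply_le {p : ι → E →L[𝕜] E} (s : Finset ι)
    (hp : ∀ i ∈ s, IsStarProjection (p i)) (x : E) :
    ∑ i ∈ s, ‖p i x‖ ^ 2 ≤ ‖∑ i ∈ s, p i‖ * ‖x‖ ^ 2 :=
  calc ∑ i ∈ s, ‖p i x‖ ^ 2 = re ⟪x, (∑ i ∈ s, p i) x⟫_𝕜 := by
        simp only [_root_.sum_apply, inner_sum, map_sum]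
        exact sum_congr rfl fun i hi => ((hp i hi).re_inner_apply_eq_norm_sq x).symm
    _ ≤ ‖x‖ * ‖(∑ i ∈ s, p i) x‖ := re_inner_le_norm _ _
    _ ≤ ‖x‖ * (‖∑ i ∈ s, p i‖ * ‖x‖) := by gcongr; exact (∑ i ∈ s, p i).le_opNorm x
    _ = ‖∑ i ∈ s, p i‖ * ‖x‖ ^ 2 := by ring

theorem sum_norm_sq_apply_le_norm_sq {p : ι → E →L[𝕜] E}
    (hp : ∀ i, IsStarProjection (p i)) (horth : Pairwise fun i j => p i * p j = 0)
    (s : Finset ι) (x : E) :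
    ∑ i ∈ s, ‖p i x‖ ^ 2 ≤ ‖x‖ ^ 2 :=
  (sum_norm_sq_apply_le s (fun i _ => hp i) x).trans <| mul_le_of_le_one_left (sq_nonneg _) <|
    (IsStarProjection.sum_of_pairwise_mul_eq_zero hp horth s).norm_le

theorem norm_sum_sq_le_of_apply_eq_self {p : ι → E →L[𝕜] E} (s : Finset ι)
    (hp : ∀ i ∈ s, IsStarProjection (p i)) {x : ι → E} (hx : ∀ i ∈ s, p i (x i) = x i) :
    ‖∑ i ∈ s, x i‖ ^ 2 ≤ ‖∑ i ∈ s, p i‖ * ∑ i ∈ s, ‖x i‖ ^ 2 := by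
  set y := ∑ i ∈ s, x i
  have hy : ‖y‖ ^ 2 = ∑ i ∈ s, re ⟪x i, p i y⟫_𝕜 := by
    rw [← inner_self_eq_norm_sq (𝕜 := 𝕜), sum_inner, map_sum]
    refine sum_congr rfl fun i hi => ?_
    rw [← (hp i hi).isSelfAdjoint.inner_apply_left, hx i hi]
  have key : ‖y‖ ^ 2 * ‖y‖ ^ 2 ≤ (‖∑ i ∈ s, p i‖ * ∑ i ∈ s, ‖x i‖ ^ 2) * ‖y‖ ^ 2 :=
    calc ‖y‖ ^ 2 * ‖y‖ ^ 2 = (∑ i ∈ s, re ⟪x i, p i y⟫_𝕜) ^ 2 := by rw [← hy]; ring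
      _ ≤ (∑ i ∈ s, ‖x i‖ * ‖p i y‖) ^ 2 := by
          gcongr
          · rw [← hy]; positivity
          · exact re_inner_le_norm _ _
      _ ≤ (∑ i ∈ s, ‖x i‖ ^ 2) * ∑ i ∈ s, ‖p i y‖ ^ 2 := sum_mul_sq_le_sq_mul_sq _ _ _
      _ ≤ (∑ i ∈ s, ‖x i‖ ^ 2) * (‖∑ i ∈ s, p i‖ * ‖y‖ ^ 2) := by
          gcongr; exact sum_norm_sq_apply_le s hp y
      _ = (‖∑ i ∈ s, p i‖ * ∑ i ∈ s, ‖x i‖ ^ 2) * ‖y‖ ^ 2 := by ring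
  rcases (sq_nonneg ‖y‖).eq_or_lt with h | h
  · rw [← h]; positivity
  · exact le_of_mul_le_mul_right key h

end InnerProduct

/-- Quantitative ghost estimate: if the pairwise orthogonal projections `Q i` sum
strongly to the identity, the finite sums of the projections `P i` have norm at most `n`,
and `P i (A Q i) = A Q i` for all `i`, then `‖A‖ ≤ √n · sup_i ‖A Q i‖`. -/
theorem stmt_8 {H : Type*}
    [NormedAddCommGroup H] [InnerProductSpace ℂ H] [CompleteSpace H]
    {I : Type*} (n : ℕ)
    (Q P : I → H →L[ℂ] H)
    (hQproj : ∀ i, Q i ∘L Q i = Q i)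
    (hQsa : ∀ i, ContinuousLinearMap.adjoint (Q i) = Q i)
    (hQorth : ∀ i j, i ≠ j → Q i ∘L Q j = 0)
    (hQsum : ∀ v : H, Filter.Tendsto (fun F : Finset I => ∑ i ∈ F, Q i v)
      Filter.atTop (nhds v))
    (hPproj : ∀ i, P i ∘L P i = P i)
    (hPsa : ∀ i, ContinuousLinearMap.adjoint (P i) = P i)
    (hPbound : ∀ F : Finset I, ‖∑ i ∈ F, P i‖ ≤ (n : ℝ))
    (A : H →L[ℂ] H)
    (hA : ∀ i, P i ∘L (A ∘L Q i) = A ∘L Q i)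
    (c : ℝ) (hc : 0 ≤ c) (hAc : ∀ i, ‖A ∘L Q i‖ ≤ c) :
    ‖A‖ ≤ Real.sqrt n * c := by
  have hQ : ∀ i, IsStarProjection (Q i) := fun i => ⟨hQproj i, hQsa i⟩
  have hP : ∀ i, IsStarProjection (P i) := fun i => ⟨hPproj i, hPsa i⟩
  refine A.opNorm_le_bound (by positivity) fun v => ?_
  have hlim : Tendsto (fun F : Finset I => ∑ i ∈ F, A (Q i v)) atTop (𝓝 (A v)) := by
    simpa [Function.comp_def] using (A.continuous.tendsto v).comp (hQsum v)
  refine le_of_tendsto hlim.norm (Eventually.of_forall fun F => ?_)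
  have hAQ : ∀ i, ‖A (Q i v)‖ ≤ c * ‖Q i v‖ := fun i =>
    calc ‖A (Q i v)‖ = ‖(A ∘L Q i) (Q i v)‖ := 
          congrArg (‖A ·‖) congr($(hQproj i) v).symm
      _ ≤ c * ‖Q i v‖ := (A ∘L Q i).le_of_opNorm_le (hAc i) _
  rw [← sq_le_sq₀ (norm_nonneg _) (by positivity)]
  calc ‖∑ i ∈ F, A (Q i v)‖ ^ 2 ≤ ‖∑ i ∈ F, P i‖ * ∑ i ∈ F, ‖A (Q i v)‖ ^ 2 :=
        norm_sum_sq_le_of_apply_eq_self F (fun i _ => hP i) fun i _ => congr($(hA i) v)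
    _ ≤ n * ∑ i ∈ F, (c * ‖Q i v‖) ^ 2 := by gcongr with i; exacts [hPbound F, hAQ i]
    _ = n * c ^ 2 * ∑ i ∈ F, ‖Q i v‖ ^ 2 := by simp only [mul_pow, ← mul_sum]; ring
    _ ≤ n * c ^ 2 * ‖v‖ ^ 2 := by gcongr; exact sum_norm_sq_apply_le_norm_sq hQ hQorth F v
    _ = (Real.sqrt n * c * ‖v‖) ^ 2 := by rw [mul_pow, mul_pow, Real.sq_sqrt n.cast_nonneg]
end

section
/- Let f : X → Y be a uniform covering of uniform bornological coarse spaces. Then the induced map 𝒪^∞(f) : 𝒪^∞(X) → 𝒪^∞(Y), (t,x) ↦ (t, f(x)), is a branched coarse covering relative to the big family 𝒪^-(Y) = ((−∞,n) × Y)_{n∈ℕ}, with connection P̂ := (ℝ × ℝ) × P, where P is the connection for f. -/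
/-- The hybrid (cone) coarse entourages of `𝒪^∞(Y) = ℝ × Y`: coarse entourages of
`ℝ ⊗ Y` (bounded time-distance, controlled `Y`-projection) which, for every uniform
scale of `ℝ × Y`, are eventually (in the time direction) of that uniform scale. -/
def coneEnt {Y : Type*} (CY : CoarseStructureOn Y) (UY : Set (Set (Y × Y))) :
    Set (Set ((ℝ × Y) × (ℝ × Y))) :=
  {V | (∃ r : ℝ, ∀ p ∈ V, |p.1.1 - p.2.1| ≤ r) ∧
       ((fun p : (ℝ × Y) × (ℝ × Y) => (p.1.2, p.2.2)) '' V ∈ CY.ent) ∧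
       (∀ ε : ℝ, 0 < ε → ∀ Uu ∈ UY, ∃ n : ℕ, ∀ p ∈ V, (n : ℝ) ≤ p.2.1 →
          |p.1.1 - p.2.1| < ε ∧ (p.1.2, p.2.2) ∈ Uu)}

/-- The bornology of the cone `ℝ × Y`: subsets of products of a bounded interval with a
bounded subset of `Y`. -/
def coneBdd {Y : Type*} (BY : Set (Set Y)) : Set (Set (ℝ × Y)) :=
  {B | ∃ r : ℝ, ∃ B0 ∈ BY, B ⊆ {q : ℝ × Y | |q.1| ≤ r ∧ q.2 ∈ B0}}

/-!
`𝒪^∞(f)` is the identity in the time coordinate, so being controlled, bornological and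
having locally finite fibres reduce to the same properties of `f`. The covering conditions
hold away from `𝒪^-(Y)` because a hybrid entourage is, above some time, of any prescribed
uniform scale: of the lifting scale of (b), where `P` lifts uniquely, and of the uniform
scale `f⁻¹(U) ∩ P` of (a), which lies in `P`; cofinality (c) makes the pairs related by `P̂`
hybrid again.
-/

section Cone

variable {X Y : Type*}

/-- The map `𝒪^∞(f) : ℝ × X → ℝ × Y`. -/
def coneMap (f : X → Y) : ℝ × X → ℝ × Y := fun q => (q.1, f q.2)

theorem exists_nat_forall_mem_of_mem_coneEnt {C : CoarseStructureOn Y} {UY : Set (Set (Y × Y))}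
    {V : Set ((ℝ × Y) × (ℝ × Y))} (hV : V ∈ coneEnt C UY) {U : Set (Y × Y)} (hU : U ∈ UY) :
    ∃ n : ℕ, ∀ p ∈ V, (n : ℝ) ≤ p.2.1 → (p.1.2, p.2.2) ∈ U := by
  obtain ⟨n, hn⟩ := hV.2.2 1 one_pos U hU
  exact ⟨n, fun p hp ht => (hn p hp ht).2⟩

theorem image_coneMap_mem_coneEnt {CX : CoarseStructureOn X} {CY : CoarseStructureOn Y}
    {UX : Set (Set (X × X))} {UY : Set (Set (Y × Y))} {f : X → Y}
    (hcontrolled : ∀ U ∈ CX.ent, (fun p : X × X => (f p.1, f p.2)) '' U ∈ CY.ent)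
    (huniform : ∀ U ∈ UY, {p : X × X | (f p.1, f p.2) ∈ U} ∈ UX)
    {V : Set ((ℝ × X) × (ℝ × X))} (hV : V ∈ coneEnt CX UX) :
    (fun p : (ℝ × X) × (ℝ × X) => (coneMap f p.1, coneMap f p.2)) '' V ∈ coneEnt CY UY := by
  obtain ⟨⟨r, hr⟩, hproj, hev⟩ := hV
  refine ⟨⟨r, ?_⟩, ?_, ?_⟩
  · rintro _ ⟨p, hp, rfl⟩
    exact hr p hp
  · have hf := hcontrolled _ hproj
    rw [Set.image_image] at hf ⊢
    exact hf
  · intro ε hε U hU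
    obtain ⟨n, hn⟩ := hev ε hε _ (huniform U hU)
    refine ⟨n, ?_⟩
    rintro _ ⟨p, hp, rfl⟩ ht
    exact hn p hp ht

theorem image_coneMap_mem_coneBdd {BX : Set (Set X)} {BY : Set (Set Y)} {f : X → Y}
    (hborn : ∀ B ∈ BX, f '' B ∈ BY) {B : Set (ℝ × X)} (hB : B ∈ coneBdd BX) :
    coneMap f '' B ∈ coneBdd BY := by
  obtain ⟨r, B0, hB0, hBsub⟩ := hB
  refine ⟨r, f '' B0, hborn B0 hB0, ?_⟩
  rintro _ ⟨p, hp, rfl⟩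
  exact ⟨(hBsub hp).1, Set.mem_image_of_mem f (hBsub hp).2⟩

theorem finite_coneMap_preimage_singleton_inter {BX : Set (Set X)} {f : X → Y}
    (hlocfin : ∀ y : Y, ∀ B ∈ BX, (f ⁻¹' {y} ∩ B).Finite) (q : ℝ × Y)
    {B : Set (ℝ × X)} (hB : B ∈ coneBdd BX) :
    (coneMap f ⁻¹' {q} ∩ B).Finite := by
  obtain ⟨r, B0, hB0, hBsub⟩ := hB
  refine ((hlocfin q.2 B0 hB0).image fun x => (q.1, x)).subset ?_
  rintro ⟨t, x⟩ ⟨hpq, hpB⟩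
  obtain ⟨rfl, hfx⟩ := Prod.ext_iff.mp hpq
  exact ⟨x, ⟨hfx, (hBsub hpB).2⟩, rfl⟩

theorem existsUnique_coneMap_lift {f : X → Y} {P : Set (X × X)} {U : Set (Y × Y)}
    (hlift : ∀ y' y : Y, (y', y) ∈ U → ∀ x : X, f x = y →
      ∃! x' : X, f x' = y' ∧ (x', x) ∈ P)
    {q' q : ℝ × Y} (hq : (q'.2, q.2) ∈ U) {p : ℝ × X} (hp : coneMap f p = q) :
    ∃! p' : ℝ × X, coneMap f p' = q' ∧ (p'.2, p.2) ∈ P := by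
  obtain ⟨x', ⟨hfx', hx'P⟩, huniq⟩ := hlift q'.2 q.2 hq p.2 (congrArg Prod.snd hp)
  refine ⟨(q'.1, x'), ⟨Prod.ext rfl hfx', hx'P⟩, ?_⟩
  rintro ⟨t, x⟩ ⟨hxq, hxP⟩
  obtain ⟨rfl, hfx⟩ := Prod.ext_iff.mp hxq
  rw [huniq x ⟨hfx, hxP⟩]

theorem connection_inter_mem_coneEnt {CX : CoarseStructureOn X} {CY : CoarseStructureOn Y}
    {UX : Set (Set (X × X))} {UY : Set (Set (Y × Y))} {f : X → Y} {P : Set (X × X)}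
    {U : Set (Y × Y)} (hUP : {p : X × X | (f p.1, f p.2) ∈ U} ∩ P ∈ CX.ent)
    (hc : ∀ W ∈ UX, ∃ U' ∈ UY, ({p : X × X | (f p.1, f p.2) ∈ U'} ∩ P) ⊆ W)
    {V : Set ((ℝ × Y) × (ℝ × Y))} (hV : V ∈ coneEnt CY UY) {n : ℕ}
    (hn : ∀ p ∈ V, (n : ℝ) ≤ p.2.1 → (p.1.2, p.2.2) ∈ U) :
    {p : (ℝ × X) × (ℝ × X) | (p.1.2, p.2.2) ∈ P} ∩
      {p | (coneMap f p.1, coneMap f p.2) ∈ V ∧ (n : ℝ) ≤ (coneMap f p.2).1}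
      ∈ coneEnt CX UX := by
  obtain ⟨⟨r, hr⟩, -, hev⟩ := hV
  refine ⟨⟨r, fun p hp => hr _ hp.2.1⟩, CX.subset_mem hUP ?_, ?_⟩
  · rintro _ ⟨p, ⟨hpP, hpV, hpn⟩, rfl⟩
    exact ⟨hn _ hpV hpn, hpP⟩
  · intro ε hε W hW
    obtain ⟨U', hU', hU'W⟩ := hc W hW
    obtain ⟨m, hm⟩ := hev ε hε U' hU'
    refine ⟨m, fun p ⟨hpP, hpV, _⟩ hpm => ?_⟩
    obtain ⟨hε', hpU'⟩ := hm _ hpV hpm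
    exact ⟨hε', hU'W ⟨hpU', hpP⟩⟩

end Cone

/-- If `f : X → Y` is a uniform covering with connection `P`, then
`𝒪^∞(f) : 𝒪^∞(X) → 𝒪^∞(Y)` is a branched coarse covering relative to the big family
`𝒪^-(Y) = ((-∞,n) × Y)_n`, with connection `P̂ = (ℝ × ℝ) × P`. -/
theorem stmt_13 {X Y : Type*}
    (CX : CoarseStructureOn X) (CY : CoarseStructureOn Y)
    (UX : Set (Set (X × X))) (UY : Set (Set (Y × Y)))
    (BX : Set (Set X)) (BY : Set (Set Y))
    (f : X → Y) (P : Set (X × X))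
    -- `f` is controlled, uniform, bornological and has locally finite fibres
    (hcontrolled : ∀ U ∈ CX.ent, (fun p : X × X => (f p.1, f p.2)) '' U ∈ CY.ent)
    (huniform : ∀ U ∈ UY, {p : X × X | (f p.1, f p.2) ∈ U} ∈ UX)
    (hborn : ∀ B ∈ BX, f '' B ∈ BY)
    (hlocfin : ∀ y : Y, ∀ B ∈ BX, (f ⁻¹' {y} ∩ B).Finite)
    -- (a): for every uniform entourage `U` of `Y`, `f⁻¹(U) ∩ P` is a uniform and a
    -- coarse entourage of `X`
    (ha : ∀ U ∈ UY, ({p : X × X | (f p.1, f p.2) ∈ U} ∩ P) ∈ UX ∧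
                    ({p : X × X | (f p.1, f p.2) ∈ U} ∩ P) ∈ CX.ent)
    -- (b): unique `P`-lifting at some uniform scale `U` of `Y`
    (hb : ∃ U ∈ UY, ∀ y' y : Y, (y', y) ∈ U → ∀ x : X, f x = y →
          ∃! x' : X, f x' = y' ∧ (x', x) ∈ P)
    -- (c): the entourages `f⁻¹(U) ∩ P` are cofinal in the uniform structure of `X`
    (hc : ∀ W ∈ UX, ∃ U ∈ UY, ({p : X × X | (f p.1, f p.2) ∈ U} ∩ P) ⊆ W) :
    -- conclusions for `F = 𝒪^∞(f) : ℝ × X → ℝ × Y` with connection `P̂`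
    ∀ F : ℝ × X → ℝ × Y, F = (fun q => (q.1, f q.2)) →
    -- `F` is controlled
    ((∀ V ∈ coneEnt CX UX, (fun p : (ℝ × X) × (ℝ × X) => (F p.1, F p.2)) '' V
        ∈ coneEnt CY UY) ∧
    -- `F` is bornological with locally finite fibres
    (∀ B ∈ coneBdd BX, F '' B ∈ coneBdd BY) ∧
    (∀ q : ℝ × Y, ∀ B ∈ coneBdd BX, (F ⁻¹' {q} ∩ B).Finite) ∧
    -- connection condition at every coarse scale of the cone, away from a member
    -- `(-∞,n) × Y` of `𝒪^-(Y)`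
    (∀ V ∈ coneEnt CY UY, ∃ n : ℕ,
      (∀ q' q : ℝ × Y, (q', q) ∈ V → (n : ℝ) ≤ q.1 → ∀ p : ℝ × X, F p = q →
        ∃! p' : ℝ × X, F p' = q' ∧ (p'.2, p.2) ∈ P) ∧
      ({p : (ℝ × X) × (ℝ × X) | (p.1.2, p.2.2) ∈ P} ∩
        {p : (ℝ × X) × (ℝ × X) | (F p.1, F p.2) ∈ V ∧ (n : ℝ) ≤ (F p.2).1}
        ∈ coneEnt CX UX)) ∧
    -- every coarse entourage of the cone over `X` is eventually contained in `P̂`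
    (∀ U ∈ coneEnt CX UX, ∃ n : ℕ, ∀ p ∈ U, (n : ℝ) ≤ (F p.2).1 →
      (p.1.2, p.2.2) ∈ P)) := by
  rintro F rfl
  obtain ⟨U0, hU0, hlift⟩ := hb
  refine ⟨fun V hV => image_coneMap_mem_coneEnt hcontrolled huniform hV,
    fun B hB => image_coneMap_mem_coneBdd hborn hB,
    fun q B hB => finite_coneMap_preimage_singleton_inter hlocfin q hB, ?_, ?_⟩
  · intro V hV
    obtain ⟨n, hn⟩ := exists_nat_forall_mem_of_mem_coneEnt hV hU0
    exact ⟨n, fun q' q hqV hqn p hp => existsUnique_coneMap_lift hlift (hn _ hqV hqn) hp,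
      connection_inter_mem_coneEnt (ha U0 hU0).2 hc hV hn⟩
  · intro U hU
    obtain ⟨n, hn⟩ := exists_nat_forall_mem_of_mem_coneEnt hU (ha U0 hU0).1
    exact ⟨n, fun p hp hpn => (hn p hp hpn).2⟩
end

section
/- Let f : X → Y be a surjective local isometry of length (path) metric spaces with the path-lifting property: every rectifiable path γ in Y starting at f(x) lifts to a path in X starting at x with the same length. For r ≥ 0 define Z_r := {y ∈ Y | the fibre f^{-1}(y) is not r-separated}, i.e. there exist distinct x, x' ∈ f^{-1}(y) with d(x,x') ≤ r. Then for all r, s ≥ 0: if y ∈ Z_r and d(y', y) ≤ s then y' ∈ Z_{r+2s}. Consequently, if V_s denotes the metric entourage of width s of Y, then V_s[Z_r] ⊆ Z_{r+2s}, so the family (Z_r)_{r ≥ 0} is a big family for the metric coarse structure of Y. -/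
/-!
Lift a path of length `≤ s + ε` from `y` to `y'` starting at two distinct points `x ≠ x'` of the
fibre over `y`. The endpoints lie over `y'`, within `s + ε` of `x` and `x'` respectively, and they
are distinct because the reversed path has a unique lift from a common endpoint. This gives two
distinct points over `y'` at distance `≤ r + 2s + 2ε`. To remove `ε`: if no two distinct points
over `y'` were within `r + 2s` of each other, the endpoints obtained for `ε ≤ r/2` could not depend
on `ε`, so they would lie within `s` of `x` and `x'`.
-/

open Set

theorem exists_ne_dist_le_add_two_mul_of_forall_pos {M : Type*} [PseudoMetricSpace M]
    {F : Set M} {x x' : M} {r s : ℝ} (hr : 0 < r) (hxx' : dist x x' ≤ r)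
    (h : ∀ ε > 0, ∃ a ∈ F, ∃ b ∈ F, a ≠ b ∧ dist x a ≤ s + ε ∧ dist x' b ≤ s + ε) :
    ∃ a ∈ F, ∃ b ∈ F, a ≠ b ∧ dist a b ≤ r + 2 * s := by
  by_contra! hsep
  have hunique : ∀ z a a', a ∈ F → a' ∈ F → dist z a ≤ s + r / 2 → dist z a' ≤ s + r / 2 →
      a = a' := by
    intro z a a' ha ha' hza hza'
    by_contra hne
    linarith [hsep a ha a' ha' hne, dist_triangle_left a a' z]
  obtain ⟨a, ha, b, hb, hab, hxa, hx'b⟩ := h (r / 2) (by positivity)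
  have hsmall : ∀ ε > 0, dist x a ≤ s + ε ∧ dist x' b ≤ s + ε := by
    intro ε hε
    obtain ⟨a', ha', b', hb', -, hxa', hx'b'⟩ := h (min ε (r / 2)) (by positivity)
    have := min_le_left ε (r / 2)
    have := min_le_right ε (r / 2)
    obtain rfl := hunique x a' a ha' ha (by linarith) hxa
    obtain rfl := hunique x' b' b hb' hb (by linarith) hx'b
    exact ⟨by linarith, by linarith⟩
  have hxa₀ : dist x a ≤ s := le_of_forall_pos_le_add fun ε hε => (hsmall ε hε).1
  have hx'b₀ : dist x' b ≤ s := le_of_forall_pos_le_add fun ε hε => (hsmall ε hε).2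
  linarith [hsep a ha b hb hab, dist_triangle4 a x x' b, dist_comm a x]

def IsLengthSpace (Y : Type*) [MetricSpace Y] : Prop :=
  ∀ a b : Y, ∀ ε : ℝ, 0 < ε → ∃ γ : ℝ → Y,
    ContinuousOn γ (Icc 0 1) ∧ γ 0 = a ∧ γ 1 = b ∧
    eVariationOn γ (Icc 0 1) ≤ ENNReal.ofReal (dist a b + ε)

section Reverse

variable {E : Type*} [PseudoEMetricSpace E] {γ : ℝ → E}

theorem mapsTo_one_sub_Icc_zero_one : MapsTo (fun t : ℝ => 1 - t) (Icc 0 1) (Icc 0 1) :=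
  fun _ ⟨h0, h1⟩ => ⟨by linarith, by linarith⟩

theorem ContinuousOn.comp_one_sub_Icc (hγ : ContinuousOn γ (Icc 0 1)) :
    ContinuousOn (fun t => γ (1 - t)) (Icc 0 1) :=
  hγ.comp (continuous_const.sub continuous_id).continuousOn mapsTo_one_sub_Icc_zero_one

theorem eVariationOn_comp_one_sub_Icc_le :
    eVariationOn (fun t => γ (1 - t)) (Icc 0 1) ≤ eVariationOn γ (Icc 0 1) :=
  eVariationOn.comp_le_of_antitoneOn γ (fun t => 1 - t)
    (fun _ _ _ _ huv => sub_le_sub_left huv 1) mapsTo_one_sub_Icc_zero_one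

end Reverse

section

variable {X Y : Type*} [MetricSpace X]

def nonSeparatedLocus (f : X → Y) (r : ℝ) : Set Y :=
  {y | ∃ x x' : X, f x = y ∧ f x' = y ∧ x ≠ x' ∧ dist x x' ≤ r}

theorem nonSeparatedLocus_mono (f : X → Y) : Monotone (nonSeparatedLocus f) :=
  fun _ _ hrr' _ ⟨x, x', hx, hx', hne, hd⟩ => ⟨x, x', hx, hx', hne, hd.trans hrr'⟩

variable [MetricSpace Y]

def HasUniquePathLifting (f : X → Y) : Prop :=
  ∀ γ : ℝ → Y, ContinuousOn γ (Icc 0 1) →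
    eVariationOn γ (Icc 0 1) ≠ ⊤ → ∀ x : X, f x = γ 0 →
    ∃ γ' : ℝ → X, ContinuousOn γ' (Icc 0 1) ∧ γ' 0 = x ∧
      (∀ t ∈ Icc (0 : ℝ) 1, f (γ' t) = γ t) ∧
      eVariationOn γ' (Icc 0 1) = eVariationOn γ (Icc 0 1) ∧
      ∀ γ'' : ℝ → X, ContinuousOn γ'' (Icc 0 1) → γ'' 0 = x →
        (∀ t ∈ Icc (0 : ℝ) 1, f (γ'' t) = γ t) →
        EqOn γ' γ'' (Icc 0 1)

namespace HasUniquePathLifting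

variable {f : X → Y} {γ : ℝ → Y}

theorem eq_zero_of_eq_one (hf : HasUniquePathLifting f) (hγ : ContinuousOn γ (Icc 0 1))
    (hγv : eVariationOn γ (Icc 0 1) ≠ ⊤) {γ₁ γ₂ : ℝ → X}
    (hγ₁ : ContinuousOn γ₁ (Icc 0 1)) (hγ₂ : ContinuousOn γ₂ (Icc 0 1))
    (h₁ : ∀ t ∈ Icc (0 : ℝ) 1, f (γ₁ t) = γ t) (h₂ : ∀ t ∈ Icc (0 : ℝ) 1, f (γ₂ t) = γ t)
    (h1 : γ₁ 1 = γ₂ 1) : γ₁ 0 = γ₂ 0 := by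
  have h1mem : (1 : ℝ) ∈ Icc (0 : ℝ) 1 := right_mem_Icc.2 zero_le_one
  obtain ⟨δ, -, -, -, -, huniq⟩ := hf (fun t => γ (1 - t)) hγ.comp_one_sub_Icc
    (ne_top_of_le_ne_top hγv eVariationOn_comp_one_sub_Icc_le) (γ₁ 1) (by simp [h₁ 1 h1mem])
  have e₁ := huniq _ hγ₁.comp_one_sub_Icc (by simp)
    (fun t ht => h₁ _ (mapsTo_one_sub_Icc_zero_one ht)) h1mem
  have e₂ := huniq _ hγ₂.comp_one_sub_Icc (by simp [h1])
    (fun t ht => h₂ _ (mapsTo_one_sub_Icc_zero_one ht)) h1mem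
  simpa using e₁.symm.trans e₂

theorem exists_ne_lift_endpoints (hf : HasUniquePathLifting f) (hγ : ContinuousOn γ (Icc 0 1))
    (hγv : eVariationOn γ (Icc 0 1) ≠ ⊤) {x x' : X} (hx : f x = γ 0) (hx' : f x' = γ 0)
    (hne : x ≠ x') :
    ∃ a b, f a = γ 1 ∧ f b = γ 1 ∧ a ≠ b ∧
      edist x a ≤ eVariationOn γ (Icc 0 1) ∧ edist x' b ≤ eVariationOn γ (Icc 0 1) := by
  have h0mem : (0 : ℝ) ∈ Icc (0 : ℝ) 1 := left_mem_Icc.2 zero_le_one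
  have h1mem : (1 : ℝ) ∈ Icc (0 : ℝ) 1 := right_mem_Icc.2 zero_le_one
  obtain ⟨γ₁, hγ₁, h₁0, h₁, hv₁, -⟩ := hf γ hγ hγv x hx
  obtain ⟨γ₂, hγ₂, h₂0, h₂, hv₂, -⟩ := hf γ hγ hγv x' hx'
  refine ⟨γ₁ 1, γ₂ 1, h₁ 1 h1mem, h₂ 1 h1mem, fun h1 => hne ?_, ?_, ?_⟩
  · rw [← h₁0, ← h₂0]
    exact hf.eq_zero_of_eq_one hγ hγv hγ₁ hγ₂ h₁ h₂ h1
  · exact h₁0 ▸ hv₁ ▸ eVariationOn.edist_le γ₁ h0mem h1mem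
  · exact h₂0 ▸ hv₂ ▸ eVariationOn.edist_le γ₂ h0mem h1mem

theorem exists_ne_preimage_dist_le (hf : HasUniquePathLifting f) (hY : IsLengthSpace Y)
    {x x' : X} {y y' : Y} {s : ℝ} (hx : f x = y) (hx' : f x' = y) (hne : x ≠ x')
    (hyy' : dist y' y ≤ s) {ε : ℝ} (hε : 0 < ε) :
    ∃ a ∈ f ⁻¹' {y'}, ∃ b ∈ f ⁻¹' {y'}, a ≠ b ∧ dist x a ≤ s + ε ∧ dist x' b ≤ s + ε := by
  obtain ⟨γ, hγ, hγ0, hγ1, hγv⟩ := hY y y' ε hε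
  have hlen : eVariationOn γ (Icc 0 1) ≤ ENNReal.ofReal (s + ε) :=
    hγv.trans (ENNReal.ofReal_le_ofReal (by linarith [dist_comm y y']))
  obtain ⟨a, b, ha, hb, hab, hxa, hx'b⟩ := hf.exists_ne_lift_endpoints hγ
    (ne_top_of_le_ne_top ENNReal.ofReal_ne_top hlen) (hγ0 ▸ hx) (hγ0 ▸ hx') hne
  have hsε : 0 ≤ s + ε := by linarith [dist_nonneg (x := y') (y := y)]
  exact ⟨a, hγ1 ▸ ha, b, hγ1 ▸ hb, hab, (edist_le_ofReal hsε).1 (hxa.trans hlen),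
    (edist_le_ofReal hsε).1 (hx'b.trans hlen)⟩

theorem mem_nonSeparatedLocus_of_dist_le (hf : HasUniquePathLifting f) (hY : IsLengthSpace Y)
    {r s : ℝ} {y y' : Y} (hy : y ∈ nonSeparatedLocus f r) (hyy' : dist y' y ≤ s) :
    y' ∈ nonSeparatedLocus f (r + 2 * s) := by
  obtain ⟨x, x', hx, hx', hne, hxx'⟩ := hy
  obtain ⟨a, ha, b, hb, hab, hd⟩ := exists_ne_dist_le_add_two_mul_of_forall_pos
    ((dist_pos.2 hne).trans_le hxx') hxx'
    fun _ hε => hf.exists_ne_preimage_dist_le hY hx hx' hne hyy' hε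
  exact ⟨a, b, ha, hb, hab, hd⟩

end HasUniquePathLifting

end

theorem stmt_14_general {X Y : Type*} [MetricSpace X] [MetricSpace Y] (f : X → Y)
    -- `Y` is a length (path metric) space
    (hlengthY : ∀ a b : Y, ∀ ε : ℝ, 0 < ε → ∃ γ : ℝ → Y,
      ContinuousOn γ (Set.Icc 0 1) ∧ γ 0 = a ∧ γ 1 = b ∧
      eVariationOn γ (Set.Icc 0 1) ≤ ENNReal.ofReal (dist a b + ε))
    -- unique lifting of rectifiable paths, with the same length
    (hlift : ∀ γ : ℝ → Y, ContinuousOn γ (Set.Icc 0 1) →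
      eVariationOn γ (Set.Icc 0 1) ≠ ⊤ → ∀ x : X, f x = γ 0 →
      ∃ γ' : ℝ → X, ContinuousOn γ' (Set.Icc 0 1) ∧ γ' 0 = x ∧
        (∀ t ∈ Set.Icc (0 : ℝ) 1, f (γ' t) = γ t) ∧
        eVariationOn γ' (Set.Icc 0 1) = eVariationOn γ (Set.Icc 0 1) ∧
        ∀ γ'' : ℝ → X, ContinuousOn γ'' (Set.Icc 0 1) → γ'' 0 = x →
          (∀ t ∈ Set.Icc (0 : ℝ) 1, f (γ'' t) = γ t) →
          Set.EqOn γ' γ'' (Set.Icc 0 1)) :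
    ∀ r s : ℝ, 0 ≤ r → 0 ≤ s →
      -- pointwise statement
      (∀ y ∈ {y : Y | ∃ x x' : X, f x = y ∧ f x' = y ∧ x ≠ x' ∧ dist x x' ≤ r},
        ∀ y' : Y, dist y' y ≤ s →
          y' ∈ {y : Y | ∃ x x' : X, f x = y ∧ f x' = y ∧ x ≠ x' ∧ dist x x' ≤ r + 2 * s}) ∧
      -- consequently `V_s[Z_r] ⊆ Z_{r+2s}`
      ({y' : Y | ∃ y ∈ {y : Y | ∃ x x' : X, f x = y ∧ f x' = y ∧ x ≠ x' ∧ dist x x' ≤ r},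
          dist y' y ≤ s} ⊆
        {y : Y | ∃ x x' : X, f x = y ∧ f x' = y ∧ x ≠ x' ∧ dist x x' ≤ r + 2 * s}) ∧
      -- and the family `(Z_r)` is increasing
      (∀ r' : ℝ, r ≤ r' →
        {y : Y | ∃ x x' : X, f x = y ∧ f x' = y ∧ x ≠ x' ∧ dist x x' ≤ r} ⊆
        {y : Y | ∃ x x' : X, f x = y ∧ f x' = y ∧ x ≠ x' ∧ dist x x' ≤ r'}) := by
  intro r s _ _
  have hthicken : ∀ y ∈ nonSeparatedLocus f r, ∀ y', dist y' y ≤ s →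
      y' ∈ nonSeparatedLocus f (r + 2 * s) :=
    fun _ hy _ hyy' => HasUniquePathLifting.mem_nonSeparatedLocus_of_dist_le hlift hlengthY hy hyy'
  exact ⟨hthicken, fun y' ⟨y, hy, hyy'⟩ => hthicken y hy y' hyy',
    fun _ hrr' => nonSeparatedLocus_mono f hrr'⟩

/-- For a surjective local isometry `f : X → Y` of length metric spaces with unique
path lifting, the non-separation loci `Z_r = {y | f⁻¹(y) is not r-separated}` satisfy
`V_s[Z_r] ⊆ Z_{r+2s}`, so they form a big family for the metric coarse structure. -/
theorem stmt_14 {X Y : Type*} [MetricSpace X] [MetricSpace Y] (f : X → Y)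
    (hsurj : Function.Surjective f)
    -- `f` is a local isometry
    (hlociso : ∀ x : X, ∃ ε : ℝ, 0 < ε ∧ ∀ x₁ ∈ Metric.ball x ε, ∀ x₂ ∈ Metric.ball x ε,
      dist (f x₁) (f x₂) = dist x₁ x₂)
    -- `Y` is a length (path metric) space
    (hlengthY : ∀ a b : Y, ∀ ε : ℝ, 0 < ε → ∃ γ : ℝ → Y,
      ContinuousOn γ (Set.Icc 0 1) ∧ γ 0 = a ∧ γ 1 = b ∧
      eVariationOn γ (Set.Icc 0 1) ≤ ENNReal.ofReal (dist a b + ε))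
    -- `X` is a length (path metric) space
    (hlengthX : ∀ a b : X, ∀ ε : ℝ, 0 < ε → ∃ γ : ℝ → X,
      ContinuousOn γ (Set.Icc 0 1) ∧ γ 0 = a ∧ γ 1 = b ∧
      eVariationOn γ (Set.Icc 0 1) ≤ ENNReal.ofReal (dist a b + ε))
    -- unique lifting of rectifiable paths, with the same length
    (hlift : ∀ γ : ℝ → Y, ContinuousOn γ (Set.Icc 0 1) →
      eVariationOn γ (Set.Icc 0 1) ≠ ⊤ → ∀ x : X, f x = γ 0 →
      ∃ γ' : ℝ → X, ContinuousOn γ' (Set.Icc 0 1) ∧ γ' 0 = x ∧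
        (∀ t ∈ Set.Icc (0 : ℝ) 1, f (γ' t) = γ t) ∧
        eVariationOn γ' (Set.Icc 0 1) = eVariationOn γ (Set.Icc 0 1) ∧
        ∀ γ'' : ℝ → X, ContinuousOn γ'' (Set.Icc 0 1) → γ'' 0 = x →
          (∀ t ∈ Set.Icc (0 : ℝ) 1, f (γ'' t) = γ t) →
          Set.EqOn γ' γ'' (Set.Icc 0 1)) :
    ∀ r s : ℝ, 0 ≤ r → 0 ≤ s →
      -- pointwise statement
      (∀ y ∈ {y : Y | ∃ x x' : X, f x = y ∧ f x' = y ∧ x ≠ x' ∧ dist x x' ≤ r},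
        ∀ y' : Y, dist y' y ≤ s →
          y' ∈ {y : Y | ∃ x x' : X, f x = y ∧ f x' = y ∧ x ≠ x' ∧ dist x x' ≤ r + 2 * s}) ∧
      -- consequently `V_s[Z_r] ⊆ Z_{r+2s}`
      ({y' : Y | ∃ y ∈ {y : Y | ∃ x x' : X, f x = y ∧ f x' = y ∧ x ≠ x' ∧ dist x x' ≤ r},
          dist y' y ≤ s} ⊆
        {y : Y | ∃ x x' : X, f x = y ∧ f x' = y ∧ x ≠ x' ∧ dist x x' ≤ r + 2 * s}) ∧
      -- and the family `(Z_r)` is increasing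
      (∀ r' : ℝ, r ≤ r' →
        {y : Y | ∃ x x' : X, f x = y ∧ f x' = y ∧ x ≠ x' ∧ dist x x' ≤ r} ⊆
        {y : Y | ∃ x x' : X, f x = y ∧ f x' = y ∧ x ≠ x' ∧ dist x x' ≤ r'}) :=
  stmt_14_general f hlengthY hlift
end
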